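/- arXiv:2012.07084 — 5 statements merged into one kernel-verified Lean document; each statement's English description precedes it below -/
import Mathlib

section
/- Let Φ = (a_n)_{n∈ℤ} be a random formal Fourier series with independent and symmetric coefficients. If the set of ω ∈ Ω for which there exists an open interval I ⊆ 𝕊¹ (possibly depending on ω) with Φ(ω) ∈ P(I) is not ℙ-null (i.e. has positive outer measure), then Φ(ω) ∈ P(𝕊¹) for ℙ-almost all ω ∈ Ω (note that 𝕊¹ itself is an open interval in the sense below). -/
/-!
By countability, some arc `B` with rational endpoints has `P (Φ ∈ Pr B) ≠ 0`; membership in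
`Pr B` does not depend on finitely many coefficients, so Kolmogorov's 0-1 law makes this
probability one. Independence and symmetry make the law of `Φ` invariant under flipping the signs
of the coefficients outside a residue class `j + kℤ`, so the half-sum of `Φ` and its flip, which is
the restriction of `Φ` to `j + kℤ`, lies in `Pr B` almost surely. A series supported on `j + kℤ` is
only multiplied by a constant under rotation by `2π/k`, hence it lies in `Pr` of every rotate of
`B`, and once `2π/k` is shorter than `B` finitely many rotates chain together to cover the circle.
Summing over the `k` residue classes gives `Φ ∈ Pr 𝕊¹`.
-/

open MeasureTheory ProbabilityTheory Filter Set

namespace AddCircle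

variable {T : ℝ}

def arc (α β : ℝ) : Set (AddCircle T) := ((↑) : ℝ → AddCircle T) '' Ioo α β

theorem isOpen_arc (α β : ℝ) : IsOpen (arc α β : Set (AddCircle T)) :=
  QuotientAddGroup.isOpenMap_coe _ isOpen_Ioo

theorem isConnected_arc {α β : ℝ} (h : α < β) : IsConnected (arc α β : Set (AddCircle T)) :=
  (isConnected_Ioo h).image _ (AddCircle.continuous_mk' T).continuousOn

theorem image_add_const_arc (α β θ : ℝ) :
    (· + (θ : AddCircle T)) '' arc α β = arc (α + θ) (β + θ) := by
  rw [arc, arc, image_image, ← image_add_const_Ioo θ α β, image_image]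
  rfl

theorem arc_subset_union {α β β' γ : ℝ} (h : β' < β) :
    (arc α γ : Set (AddCircle T)) ⊆ arc α β ∪ arc β' γ := by
  rw [arc, arc, arc, ← image_union]
  refine image_mono fun t ht => ?_
  rcases lt_or_ge t β with htβ | htβ
  · exact Or.inl ⟨ht.1, htβ⟩
  · exact Or.inr ⟨h.trans_le htβ, ht.2⟩

theorem arc_eq_univ {α β : ℝ} (hT : 0 < T) (h : T < β - α) :
    (arc α β : Set (AddCircle T)) = univ := by
  refine eq_univ_of_forall fun y => ?_
  obtain ⟨t, ht, rfl⟩ : ∃ t ∈ Ico ((α + β - T) / 2) ((α + β - T) / 2 + T), (t : AddCircle T) = y :=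
    ⟨_, (QuotientAddGroup.equivIcoMod hT _ y).2,
      (QuotientAddGroup.equivIcoMod hT _).symm_apply_apply y⟩
  exact ⟨t, ⟨by linarith [ht.1], by linarith [ht.2]⟩, rfl⟩

theorem exists_rat_arc_subset {U : Set (AddCircle T)} (hU : IsOpen U) (hne : U.Nonempty) :
    ∃ q₁ q₂ : ℚ, q₁ < q₂ ∧ arc (q₁ : ℝ) q₂ ⊆ U := by
  obtain ⟨y, hy⟩ := hne
  obtain ⟨x, rfl⟩ := QuotientAddGroup.mk_surjective y
  obtain ⟨δ, hδ, hball⟩ := Metric.isOpen_iff.mp (hU.preimage (AddCircle.continuous_mk' T)) x hy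
  rw [Real.ball_eq_Ioo] at hball
  obtain ⟨q₁, hq₁⟩ := exists_rat_btwn (sub_lt_self x hδ)
  obtain ⟨q₂, hq₂⟩ := exists_rat_btwn (lt_add_of_pos_right x hδ)
  exact ⟨q₁, q₂, by exact_mod_cast hq₁.2.trans hq₂.1,
    image_subset_iff.2 fun t ht => hball ⟨hq₁.1.trans ht.1, ht.2.trans hq₂.2⟩⟩

end AddCircle

section ZeroOne

variable {ι Ω β : Type*} [MeasurableSpace β] {X : ι → Ω → β}

theorem measurableSet_limsup_cofinite_preimage [Nonempty Ω] {S : Set (ι → β)} (hS : MeasurableSet S)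
    (hinv : ∀ x y, (∀ᶠ i in cofinite, x i = y i) → x ∈ S → y ∈ S) :
    MeasurableSet[limsup (fun i => MeasurableSpace.comap (X i) inferInstance) cofinite]
      ((fun ω i => X i ω) ⁻¹' S) := by
  classical
  obtain ⟨ω₀⟩ := ‹Nonempty Ω›
  rw [limsup_eq_iInf_iSup, MeasurableSpace.measurableSet_iInf]
  intro U
  rw [MeasurableSpace.measurableSet_iInf]
  intro hU
  set M := ⨆ i ∈ U, MeasurableSpace.comap (X i) inferInstance
  let Ψ : Ω → ι → β := fun ω i => if i ∈ U then X i ω else X i ω₀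
  have hΨ : Measurable[M] Ψ := by
    refine measurable_pi_lambda _ fun i => ?_
    by_cases hi : i ∈ U
    · simpa [Ψ, hi] using measurable_iff_comap_le.2
        (le_biSup (fun i => MeasurableSpace.comap (X i) inferInstance) hi)
    · simp [Ψ, hi]
  have hagree : ∀ ω, ∀ᶠ i in cofinite, X i ω = Ψ ω i := fun ω =>
    mem_of_superset hU fun i hi => by simp [Ψ, show i ∈ U from hi]
  have hpre : (fun ω i => X i ω) ⁻¹' S = Ψ ⁻¹' S := by
    ext ω
    exact ⟨hinv _ _ (hagree ω), hinv _ _ ((hagree ω).mono fun i hi => hi.symm)⟩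
  rw [hpre]
  exact hΨ hS

theorem ae_mem_of_measure_ne_zero_of_cofinite_invariant [MeasurableSpace Ω]
    {P : Measure Ω} [IsProbabilityMeasure P]
    (hX : ∀ i, Measurable (X i)) (hindep : iIndepFun X P) {S : Set (ι → β)}
    (hS : MeasurableSet S) (hinv : ∀ x y, (∀ᶠ i in cofinite, x i = y i) → x ∈ S → y ∈ S)
    (hpos : P ((fun ω i => X i ω) ⁻¹' S) ≠ 0) : ∀ᵐ ω ∂P, (fun i => X i ω) ∈ S := by
  have := nonempty_of_isProbabilityMeasure P
  have h01 := measure_zero_or_one_of_measurableSet_limsup (fun i => (hX i).comap_le)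
    hindep.iIndep (p := Set.Finite) (ns := fun s : Finset ι => (s : Set ι))
    (fun t ht => by rwa [mem_cofinite, compl_compl])
    (directed_of_isDirected_le fun s t h => Finset.coe_subset.2 h) (fun s => s.finite_toSet)
    (fun i => ⟨{i}, by simp⟩) (measurableSet_limsup_cofinite_preimage hS hinv)
  refine (ae_mem_iff_measure_eq (measurable_pi_lambda _ hX hS).nullMeasurableSet).2 ?_
  rw [measure_univ]
  exact h01.resolve_left hpos

end ZeroOne

section SignFlip

variable {ι Ω : Type*} [MeasurableSpace Ω] {P : Measure Ω}

theorem map_fun_ite_neg_eq {β : Type*} [MeasurableSpace β] [Neg β] [MeasurableNeg β]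
    {X : ι → Ω → β} (hX : ∀ i, Measurable (X i)) (hindep : iIndepFun X P)
    (hsymm : ∀ i, P.map (X i) = P.map (fun ω => -X i ω)) (s : Set ι) [DecidablePred (· ∈ s)] :
    P.map (fun ω i => if i ∈ s then -X i ω else X i ω) = P.map (fun ω i => X i ω) := by
  let g : ι → β → β := fun i => if i ∈ s then Neg.neg else id
  have hg : ∀ i, Measurable (g i) := fun i => by
    by_cases hi : i ∈ s <;> simp only [g, hi, if_true, if_false]
    exacts [measurable_neg, measurable_id]
  have hflip : (fun ω i => if i ∈ s then -X i ω else X i ω) = fun ω i => (g i ∘ X i) ω := by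
    ext ω i
    by_cases hi : i ∈ s <;> simp [g, hi]
  rw [hflip, (hindep.comp g hg).map_fun_eq_infinitePi_map fun i => (hg i).comp (hX i),
    hindep.map_fun_eq_infinitePi_map hX]
  congr 1
  funext i
  by_cases hi : i ∈ s
  · simp [g, hi, Function.comp_def, hsymm i]
  · simp [g, hi]

theorem ae_indicator_mem_of_ae_mem {X : ι → Ω → ℂ} (hX : ∀ i, Measurable (X i))
    (hindep : iIndepFun X P)
    (hsymm : ∀ i, P.map (X i) = P.map (fun ω => -X i ω)) {S : Set (ι → ℂ)}
    (hS : MeasurableSet S) (hadd : ∀ f g, f ∈ S → g ∈ S → f + g ∈ S)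
    (hsmul : ∀ (c : ℂ) f, f ∈ S → c • f ∈ S) (hX_mem : ∀ᵐ ω ∂P, (fun i => X i ω) ∈ S)
    (s : Set ι) : ∀ᵐ ω ∂P, s.indicator (fun i => X i ω) ∈ S := by
  classical
  have hmeas : Measurable fun ω i => if i ∈ sᶜ then -X i ω else X i ω :=
    measurable_pi_lambda _ fun i => by
      by_cases hi : i ∈ sᶜ <;> simp only [hi, if_true, if_false]
      exacts [(hX i).neg, hX i]
  have hflip : ∀ᵐ ω ∂P, (fun i => if i ∈ sᶜ then -X i ω else X i ω) ∈ S := by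
    have h := (ae_map_iff (measurable_pi_lambda _ hX).aemeasurable hS).2 hX_mem
    rw [← map_fun_ite_neg_eq hX hindep hsymm sᶜ] at h
    exact (ae_map_iff hmeas.aemeasurable hS).1 h
  filter_upwards [hX_mem, hflip] with ω h₁ h₂
  have hhalf : s.indicator (fun i => X i ω)
      = (2⁻¹ : ℂ) • ((fun i => X i ω) + fun i => if i ∈ sᶜ then -X i ω else X i ω) := by
    ext i
    by_cases hi : i ∈ s
    · simp [hi]
      ring
    · simp [hi]
  rw [hhalf]
  exact hsmul _ _ (hadd _ _ h₁ h₂)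

end SignFlip

theorem mem_of_eventuallyEq_cofinite {ι M : Type*} [AddGroup M] {S : Set (ι → M)}
    (hadd : ∀ f g, f ∈ S → g ∈ S → f + g ∈ S)
    (hfin : ∀ f : ι → M, (Function.support f).Finite → f ∈ S) {f g : ι → M}
    (hfg : ∀ᶠ i in cofinite, f i = g i) (hf : f ∈ S) : g ∈ S := by
  have hsupp : (Function.support (-f + g)).Finite :=
    (eventually_cofinite.1 hfg).subset fun i hi h => hi (by simp [h])
  simpa using hadd _ _ hf (hfin _ hsupp)

theorem Finset.sum_indicator_mod_int {R : Type*} [AddCommMonoid R] (m : ℕ) [NeZero m]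
    (f : ℤ → R) : f = ∑ a : ZMod m, {n : ℤ | (n : ZMod m) = a}.indicator f := by
  ext n
  simp [Finset.sum_apply, Set.indicator_apply]

open Complex in
theorem exp_I_mul_two_pi_div_eq_of_intCast_eq {k : ℕ} {n m : ℤ} (h : (n : ZMod k) = m) :
    exp (I * n * ↑(2 * Real.pi / k)) = exp (I * m * ↑(2 * Real.pi / k)) := by
  obtain ⟨l, hl⟩ := (ZMod.intCast_eq_intCast_iff_dvd_sub n m k).1 h
  rcases eq_or_ne k 0 with rfl | hk
  · simp
  · rw [exp_eq_exp_iff_exists_int]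
    refine ⟨-l, ?_⟩
    have hn : (n : ℂ) = m - k * l := by exact_mod_cast (by linarith : n = m - k * l)
    rw [hn]
    push_cast
    field_simp
    ring

section LocalToGlobal

open AddCircle

local notation "𝕋" => AddCircle (2 * Real.pi)

variable {Pr : Set 𝕋 → Set (ℤ → ℂ)}

theorem exists_rat_arc_measure_ne_zero
    (hcover : ∀ I₀ I₁ I₂, IsOpen I₀ → IsConnected I₀ → IsOpen I₁ → IsConnected I₁ →
      IsOpen I₂ → IsConnected I₂ → I₀ ⊆ I₁ ∪ I₂ → Pr I₁ ∩ Pr I₂ ⊆ Pr I₀)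
    {Ω : Type*} [MeasurableSpace Ω] {μ : Measure Ω} {Φ : Ω → ℤ → ℂ}
    (h : μ {ω | ∃ I : Set 𝕋, IsOpen I ∧ IsConnected I ∧ Φ ω ∈ Pr I} ≠ 0) :
    ∃ q₁ q₂ : ℚ, q₁ < q₂ ∧ μ (Φ ⁻¹' Pr (arc q₁ q₂)) ≠ 0 := by
  by_contra! hnull
  refine h (measure_mono_null ?_ (measure_iUnion_null fun q : ℚ × ℚ =>
    measure_iUnion_null fun hq : q.1 < q.2 => hnull q.1 q.2 hq))
  rintro ω ⟨I, hIo, hIc, hω⟩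
  obtain ⟨q₁, q₂, hq, hsub⟩ := exists_rat_arc_subset hIo hIc.nonempty
  have hq' : (q₁ : ℝ) < q₂ := by exact_mod_cast hq
  exact mem_iUnion₂.2 ⟨(q₁, q₂), hq, hcover _ I I (isOpen_arc _ _) (isConnected_arc hq')
    hIo hIc hIo hIc (by rwa [union_self]) ⟨hω, hω⟩⟩

theorem mem_arc_of_mem_arc_translates
    (hcover : ∀ I₀ I₁ I₂, IsOpen I₀ → IsConnected I₀ → IsOpen I₁ → IsConnected I₁ →
      IsOpen I₂ → IsConnected I₂ → I₀ ⊆ I₁ ∪ I₂ → Pr I₁ ∩ Pr I₂ ⊆ Pr I₀)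
    {f : ℤ → ℂ} {α β θ : ℝ} (hθ : 0 ≤ θ) (hθβ : θ < β - α)
    (h : ∀ j : ℕ, f ∈ Pr (arc (α + j * θ) (β + j * θ))) (j : ℕ) :
    f ∈ Pr (arc α (β + j * θ)) := by
  induction j with
  | zero => simpa using h 0
  | succ j ih =>
    have hjθ : 0 ≤ (j : ℝ) * θ := by positivity
    refine hcover _ _ _ (isOpen_arc _ _) (isConnected_arc ?_) (isOpen_arc _ _)
      (isConnected_arc ?_) (isOpen_arc _ _) (isConnected_arc ?_) (arc_subset_union ?_)
      ⟨ih, h (j + 1)⟩ <;> push_cast <;> linarith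

open Complex in
theorem mem_arc_add_of_support_subset_fiber
    (hsmul : ∀ I, IsOpen I → IsConnected I →
      ∀ (c : ℂ) (f : ℤ → ℂ), f ∈ Pr I → c • f ∈ Pr I)
    (hrot : ∀ I, IsOpen I → IsConnected I → ∀ (θ₀ : ℝ) (f : ℤ → ℂ), f ∈ Pr I →
      (fun n : ℤ => f n * Complex.exp (Complex.I * n * θ₀))
        ∈ Pr ((fun x => x + (θ₀ : 𝕋)) '' I))
    {k : ℕ} {j : ZMod k} {f : ℤ → ℂ} (hf : ∀ n, f n ≠ 0 → (n : ZMod k) = j) {α β : ℝ}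
    (hαβ : α < β) (hmem : f ∈ Pr (arc α β)) :
    f ∈ Pr (arc (α + 2 * Real.pi / k) (β + 2 * Real.pi / k)) := by
  obtain ⟨m, rfl⟩ := ZMod.intCast_surjective j
  set c := exp (I * m * ↑(2 * Real.pi / k))
  have hphase : (fun n : ℤ => f n * exp (I * n * ↑(2 * Real.pi / k))) = c • f := by
    funext n
    by_cases hn : f n = 0
    · simp [hn]
    · rw [Pi.smul_apply, smul_eq_mul, mul_comm, exp_I_mul_two_pi_div_eq_of_intCast_eq (hf n hn)]
  have h := hrot _ (isOpen_arc α β) (isConnected_arc hαβ) (2 * Real.pi / k) f hmem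
  rw [image_add_const_arc, hphase] at h
  simpa [c] using hsmul _ (isOpen_arc _ _) (isConnected_arc (by linarith)) c⁻¹ _ h

theorem mem_univ_of_support_subset_fiber
    (hsmul : ∀ I, IsOpen I → IsConnected I →
      ∀ (c : ℂ) (f : ℤ → ℂ), f ∈ Pr I → c • f ∈ Pr I)
    (hcover : ∀ I₀ I₁ I₂, IsOpen I₀ → IsConnected I₀ → IsOpen I₁ → IsConnected I₁ →
      IsOpen I₂ → IsConnected I₂ → I₀ ⊆ I₁ ∪ I₂ → Pr I₁ ∩ Pr I₂ ⊆ Pr I₀)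
    (hrot : ∀ I, IsOpen I → IsConnected I → ∀ (θ₀ : ℝ) (f : ℤ → ℂ), f ∈ Pr I →
      (fun n : ℤ => f n * Complex.exp (Complex.I * n * θ₀))
        ∈ Pr ((fun x => x + (θ₀ : 𝕋)) '' I))
    {k : ℕ} (hk : 0 < k) {j : ZMod k} {f : ℤ → ℂ} (hf : ∀ n, f n ≠ 0 → (n : ZMod k) = j)
    {α β : ℝ} (hlen : 2 * Real.pi / k < β - α) (hmem : f ∈ Pr (arc α β)) : f ∈ Pr univ := by
  have hθ : 0 ≤ 2 * Real.pi / k := by positivity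
  have htranslates : ∀ i : ℕ,
      f ∈ Pr (arc (α + i * (2 * Real.pi / k)) (β + i * (2 * Real.pi / k))) := by
    intro i
    induction i with
    | zero => simpa using hmem
    | succ i ih =>
      have hi : (0 : ℝ) ≤ i * (2 * Real.pi / k) := by positivity
      convert mem_arc_add_of_support_subset_fiber hsmul hrot hf (by linarith) ih using 3 <;>
        push_cast <;> ring
  have hfull := mem_arc_of_mem_arc_translates hcover hθ hlen htranslates k
  have hk' : (k : ℝ) ≠ 0 := by positivity
  rwa [mul_div_cancel₀ _ hk', arc_eq_univ Real.two_pi_pos (by linarith)] at hfull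

end LocalToGlobal

theorem kahane_local_to_global_general
    {Ω : Type*} [MeasurableSpace Ω] (P : Measure Ω) [IsProbabilityMeasure P]
    (a : ℤ → Ω → ℂ) (hmeas : ∀ n, Measurable (a n))
    (hindep : iIndepFun a P)
    (hsymm : ∀ n, Measure.map (a n) P = Measure.map (fun ω => -(a n ω)) P)
    (Pr : Set (AddCircle (2 * Real.pi)) → Set (ℤ → ℂ))
    -- (v) each `Pr I` is Borel
    (hBorel : ∀ I, IsOpen I → IsConnected I → MeasurableSet (Pr I))
    -- (i) `Pr I` is a subspace containing all finitely supported sequences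
    (hadd : ∀ I, IsOpen I → IsConnected I →
      ∀ f g : ℤ → ℂ, f ∈ Pr I → g ∈ Pr I → f + g ∈ Pr I)
    (hsmul : ∀ I, IsOpen I → IsConnected I →
      ∀ (c : ℂ) (f : ℤ → ℂ), f ∈ Pr I → c • f ∈ Pr I)
    (hfin : ∀ I, IsOpen I → IsConnected I →
      ∀ f : ℤ → ℂ, (Function.support f).Finite → f ∈ Pr I)
    -- (ii) covering monotonicity
    (hcover : ∀ I₀ I₁ I₂, IsOpen I₀ → IsConnected I₀ → IsOpen I₁ → IsConnected I₁ →
      IsOpen I₂ → IsConnected I₂ → I₀ ⊆ I₁ ∪ I₂ → Pr I₁ ∩ Pr I₂ ⊆ Pr I₀)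
    -- (iii) rotation covariance
    (hrot : ∀ I, IsOpen I → IsConnected I → ∀ (θ₀ : ℝ) (f : ℤ → ℂ), f ∈ Pr I →
      (fun n : ℤ => f n * Complex.exp (Complex.I * n * θ₀))
        ∈ Pr ((fun x => x + (θ₀ : AddCircle (2 * Real.pi))) '' I))
    -- positive outer probability of local regularity
    (hpos : P {ω | ∃ I : Set (AddCircle (2 * Real.pi)),
        IsOpen I ∧ IsConnected I ∧ (fun n => a n ω) ∈ Pr I} ≠ 0) :
    ∀ᵐ ω ∂P, (fun n => a n ω) ∈ Pr Set.univ := by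
  obtain ⟨q₁, q₂, hq, hBpos⟩ := exists_rat_arc_measure_ne_zero hcover hpos
  have hq' : (q₁ : ℝ) < q₂ := by exact_mod_cast hq
  set B : Set (AddCircle (2 * Real.pi)) := AddCircle.arc q₁ q₂
  have hBo : IsOpen B := AddCircle.isOpen_arc _ _
  have hBc : IsConnected B := AddCircle.isConnected_arc hq'
  have hB : ∀ᵐ ω ∂P, (fun n => a n ω) ∈ Pr B :=
    ae_mem_of_measure_ne_zero_of_cofinite_invariant hmeas hindep (hBorel B hBo hBc)
      (fun _ _ => mem_of_eventuallyEq_cofinite (hadd B hBo hBc) (hfin B hBo hBc)) hBpos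
  obtain ⟨k, hk⟩ := exists_nat_one_div_lt (div_pos (sub_pos.2 hq') Real.two_pi_pos)
  have hlen : 2 * Real.pi / (k + 1 : ℕ) < q₂ - q₁ := by
    rw [lt_div_iff₀ Real.two_pi_pos, one_div_mul_eq_div] at hk
    exact_mod_cast hk
  have hfibers : ∀ᵐ ω ∂P, ∀ j : ZMod (k + 1),
      {n : ℤ | (n : ZMod (k + 1)) = j}.indicator (fun n => a n ω) ∈ Pr B :=
    ae_all_iff.2 fun j => ae_indicator_mem_of_ae_mem hmeas hindep hsymm (hBorel B hBo hBc)
      (hadd B hBo hBc) (hsmul B hBo hBc) hB _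
  filter_upwards [hfibers] with ω hω
  rw [Finset.sum_indicator_mod_int (k + 1) (fun n => a n ω)]
  exact Finset.sum_induction _ (· ∈ Pr univ) (hadd univ isOpen_univ isConnected_univ)
    (hfin univ isOpen_univ isConnected_univ 0 (by simp)) fun j _ =>
      mem_univ_of_support_subset_fiber hsmul hcover hrot k.succ_pos
        (fun _ hn => (Set.mem_of_indicator_ne_zero hn :)) hlen (hω j)

/-- Kahane-type local-to-global principle for random formal Fourier series on the circle
`𝕊¹ = ℝ/2πℤ`: identify formal Fourier series with their coefficient sequences in `ℂ^ℤ`.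
Given Borel "regularity properties" `P(I) ⊆ ℂ^ℤ` indexed by open intervals `I ⊆ 𝕊¹`
satisfying (i) `P(I)` is a subspace containing all finitely supported sequences,
(ii) `P(I₀) ⊇ P(I₁) ∩ P(I₂)` whenever `I₀ ⊆ I₁ ∪ I₂`, (iii) rotation covariance, and
(iv) invariance under the coefficient shifts (multiplication by `e^{±iθ}`), any random
formal Fourier series with independent symmetric coefficients which satisfies `P(I)` for
some (random) open interval with positive outer probability satisfies `P(𝕊¹)` almost
surely. -/
theorem kahane_local_to_global
    {Ω : Type*} [MeasurableSpace Ω] (P : Measure Ω) [IsProbabilityMeasure P]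
    (a : ℤ → Ω → ℂ) (hmeas : ∀ n, Measurable (a n))
    (hindep : iIndepFun a P)
    (hsymm : ∀ n, Measure.map (a n) P = Measure.map (fun ω => -(a n ω)) P)
    (Pr : Set (AddCircle (2 * Real.pi)) → Set (ℤ → ℂ))
    -- (v) each `Pr I` is Borel
    (hBorel : ∀ I, IsOpen I → IsConnected I → MeasurableSet (Pr I))
    -- (i) `Pr I` is a subspace containing all finitely supported sequences
    (hadd : ∀ I, IsOpen I → IsConnected I →
      ∀ f g : ℤ → ℂ, f ∈ Pr I → g ∈ Pr I → f + g ∈ Pr I)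
    (hsmul : ∀ I, IsOpen I → IsConnected I →
      ∀ (c : ℂ) (f : ℤ → ℂ), f ∈ Pr I → c • f ∈ Pr I)
    (hfin : ∀ I, IsOpen I → IsConnected I →
      ∀ f : ℤ → ℂ, (Function.support f).Finite → f ∈ Pr I)
    -- (ii) covering monotonicity
    (hcover : ∀ I₀ I₁ I₂, IsOpen I₀ → IsConnected I₀ → IsOpen I₁ → IsConnected I₁ →
      IsOpen I₂ → IsConnected I₂ → I₀ ⊆ I₁ ∪ I₂ → Pr I₁ ∩ Pr I₂ ⊆ Pr I₀)
    -- (iii) rotation covariance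
    (hrot : ∀ I, IsOpen I → IsConnected I → ∀ (θ₀ : ℝ) (f : ℤ → ℂ), f ∈ Pr I →
      (fun n : ℤ => f n * Complex.exp (Complex.I * n * θ₀))
        ∈ Pr ((fun x => x + (θ₀ : AddCircle (2 * Real.pi))) '' I))
    -- (iv) shift invariance
    (hshift : ∀ I, IsOpen I → IsConnected I → ∀ f : ℤ → ℂ, f ∈ Pr I →
      (fun n : ℤ => f (n - 1)) ∈ Pr I ∧ (fun n : ℤ => f (n + 1)) ∈ Pr I)
    -- positive outer probability of local regularity
    (hpos : P {ω | ∃ I : Set (AddCircle (2 * Real.pi)),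
        IsOpen I ∧ IsConnected I ∧ (fun n => a n ω) ∈ Pr I} ≠ 0) :
    ∀ᵐ ω ∂P, (fun n => a n ω) ∈ Pr Set.univ :=
  kahane_local_to_global_general P a hmeas hindep hsymm Pr hBorel hadd hsmul hfin hcover hrot hpos
end

section
/- Let d be a positive integer, A > 0 a real number, and (λ_n)_{n∈ℕ} a nondecreasing sequence of nonnegative real numbers with λ_n → ∞ as n → ∞. Define the counting function N(λ) = #{n ∈ ℕ : λ_n ≤ λ} for λ ≥ 0. If N(λ) = (1 + o(1)) · A · λ^{d/2} as λ → ∞, then λ_n = (1 + o(1)) · A^{−2/d} · n^{2/d} as n → ∞. -/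
open Filter

/-- Inversion of Weyl's law: if the eigenvalue counting function `N(λ) = #{n : λ_n ≤ λ}`
satisfies `N(λ) = (1 + o(1)) · A · λ^(d/2)` as `λ → ∞`, then
`λ_n = (1 + o(1)) · A^(−2/d) · n^(2/d)` as `n → ∞`. -/
theorem weyl_inversion (d : ℕ) (hd : 0 < d) (A : ℝ) (hA : 0 < A)
    (lam : ℕ → ℝ) (hnonneg : ∀ n, 0 ≤ lam n) (hmono : Monotone lam)
    (htend : Tendsto lam atTop atTop)
    (hN : Tendsto
      (fun t : ℝ => (Nat.card {n : ℕ | lam n ≤ t} : ℝ) / (A * t ^ ((d : ℝ) / 2)))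
      atTop (nhds 1)) :
    Tendsto
      (fun n : ℕ => lam n / (A ^ (-(2 : ℝ) / d) * (n : ℝ) ^ ((2 : ℝ) / d)))
      atTop (nhds 1) := by
  have hdR : (0:ℝ) < d := by exact_mod_cast hd
  set e : ℝ := (d : ℝ) / 2 with he
  set p : ℝ := (2 : ℝ) / d with hp
  have hep : e * p = 1 := by
    rw [he, hp]; field_simp
  set N : ℝ → ℕ := fun t => Nat.card {n : ℕ | lam n ≤ t} with hNdef
  -- the counting sets are finite
  have hfin : ∀ t : ℝ, {n : ℕ | lam n ≤ t}.Finite := by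
    intro t
    obtain ⟨m, hm⟩ := Filter.eventually_atTop.1 (htend.eventually_gt_atTop t)
    refine (Set.finite_Iio m).subset fun k hk => ?_
    simp only [Set.mem_Iio]
    by_contra h
    push_neg at h
    exact absurd hk (not_le.2 (hm k h))
  -- the reciprocal ratio also tends to 1
  have hr : Tendsto (fun t : ℝ => A * t ^ e / (N t : ℝ)) atTop (nhds 1) := by
    have := hN.inv₀ one_ne_zero
    simpa [inv_div, N] using this
  -- lower counting bound
  have hlow : ∀ n : ℕ, (n : ℝ) + 1 ≤ (N (lam n) : ℝ) := by
    intro n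
    have hsub : Set.Iic n ⊆ {k : ℕ | lam k ≤ lam n} := fun k hk => hmono hk
    have h1 : Nat.card (Set.Iic n) ≤ N (lam n) := Nat.card_mono (hfin (lam n)) hsub
    have h2 : Nat.card (Set.Iic n) = n + 1 := by simp
    rw [h2] at h1
    exact_mod_cast h1
  -- upper counting bound
  have hup : ∀ (n : ℕ) (t : ℝ), t < lam n → N t ≤ n := by
    intro n t ht
    have hsub : {k : ℕ | lam k ≤ t} ⊆ Set.Iio n := by
      intro k hk
      simp only [Set.mem_Iio]
      by_contra h
      push_neg at h
      exact absurd hk (not_le.2 (lt_of_lt_of_le ht (hmono h)))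
    have h1 : N t ≤ Nat.card (Set.Iio n) := Nat.card_mono (Set.finite_Iio n) hsub
    simpa using h1
  set θ : ℕ → ℝ := fun n => (n : ℝ) / ((n : ℝ) + 1) with hθdef
  set tt : ℕ → ℝ := fun n => θ n * lam n with httdef
  have hθ0 : ∀ n, 0 ≤ θ n := fun n => div_nonneg (Nat.cast_nonneg n) (by positivity)
  have hθ1 : ∀ n, θ n < 1 := fun n => by
    show (n : ℝ) / ((n : ℝ) + 1) < 1
    rw [div_lt_one (by positivity)]
    linarith
  have hθtend : Tendsto θ atTop (nhds 1) := by
    have h0 : Tendsto (fun n : ℕ => 1 - 1 / ((n : ℝ) + 1)) atTop (nhds (1 - 0)) :=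
      tendsto_const_nhds.sub (tendsto_one_div_add_atTop_nhds_zero_nat)
    rw [sub_zero] at h0
    refine h0.congr fun n => ?_
    show 1 - 1 / ((n : ℝ) + 1) = (n : ℝ) / ((n : ℝ) + 1)
    have : ((n : ℝ) + 1) ≠ 0 := by positivity
    field_simp
    ring
  have htt : Tendsto tt atTop atTop :=
    Filter.Tendsto.pos_mul_atTop one_pos hθtend htend
  set g : ℕ → ℝ := fun n => A * lam n ^ e / n with hgdef
  -- lower bounding sequence
  set L : ℕ → ℝ := fun n => (((n : ℝ) + 1) / n) * (A * lam n ^ e / (N (lam n) : ℝ)) with hLdef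
  have hLtend : Tendsto L atTop (nhds 1) := by
    have h1 : Tendsto (fun n : ℕ => ((n : ℝ) + 1) / n) atTop (nhds 1) := by
      have h0 : Tendsto (fun n : ℕ => 1 + 1 / (n : ℝ)) atTop (nhds (1 + 0)) :=
        tendsto_const_nhds.add tendsto_one_div_atTop_nhds_zero_nat
      rw [add_zero] at h0
      refine h0.congr' ?_
      filter_upwards [eventually_ge_atTop 1] with n hn
      have hn0 : (n : ℝ) ≠ 0 := by
        have : (0:ℝ) < n := by exact_mod_cast hn
        exact this.ne'
      field_simp
    have h2 : Tendsto (fun n : ℕ => A * lam n ^ e / (N (lam n) : ℝ)) atTop (nhds 1) :=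
      hr.comp htend
    simpa using h1.mul h2
  -- upper bounding sequence
  set U : ℕ → ℝ := fun n => (A * tt n ^ e / (N (tt n) : ℝ)) / θ n ^ e with hUdef
  have hUtend : Tendsto U atTop (nhds 1) := by
    have h1 : Tendsto (fun n : ℕ => A * tt n ^ e / (N (tt n) : ℝ)) atTop (nhds 1) :=
      hr.comp htt
    have h2 : Tendsto (fun n : ℕ => θ n ^ e) atTop (nhds 1) := by
      have hc := (Real.continuousAt_rpow_const 1 e (Or.inl one_ne_zero)).tendsto.comp hθtend
      simpa [Real.one_rpow, Function.comp_def] using hc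
    simpa only [div_one, U, Pi.div_def] using h1.div h2 one_ne_zero
  -- L ≤ g eventually
  have hLg : ∀ᶠ n in atTop, L n ≤ g n := by
    filter_upwards [eventually_ge_atTop 1] with n hn
    have hnpos : (0:ℝ) < n := by exact_mod_cast hn
    have hX : (0:ℝ) ≤ A * lam n ^ e :=
      mul_nonneg hA.le (Real.rpow_nonneg (hnonneg n) e)
    have hNn : ((n : ℝ) + 1) ≤ (N (lam n) : ℝ) := hlow n
    have hNpos : (0:ℝ) < (N (lam n) : ℝ) := by linarith
    show ((n : ℝ) + 1) / n * (A * lam n ^ e / (N (lam n) : ℝ)) ≤ A * lam n ^ e / n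
    rw [div_mul_div_comm, div_le_div_iff₀ (by positivity) hnpos]
    have key : ((n : ℝ) + 1) * (A * lam n ^ e) ≤ (N (lam n) : ℝ) * (A * lam n ^ e) :=
      mul_le_mul_of_nonneg_right hNn hX
    nlinarith
  -- g ≤ U eventually
  have hgU : ∀ᶠ n in atTop, g n ≤ U n := by
    filter_upwards [eventually_ge_atTop 1, htend.eventually_gt_atTop 0,
      htt.eventually_ge_atTop (lam 0)] with n hn hlam0 htt0
    have hnpos : (0:ℝ) < n := by exact_mod_cast hn
    have hθpos : 0 < θ n := by
      show (0:ℝ) < (n : ℝ) / ((n : ℝ) + 1)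
      exact div_pos (by exact_mod_cast hn) (by positivity)
    have httlt : tt n < lam n := by
      show θ n * lam n < lam n
      calc θ n * lam n < 1 * lam n := mul_lt_mul_of_pos_right (hθ1 n) hlam0
        _ = lam n := one_mul _
    have httnn : 0 ≤ tt n := mul_nonneg (hθ0 n) (hnonneg n)
    have hNle : (N (tt n) : ℝ) ≤ n := by exact_mod_cast hup n (tt n) httlt
    have hN1 : 1 ≤ N (tt n) := by
      have hsub : Set.Iic 0 ⊆ {k : ℕ | lam k ≤ tt n} := by
        intro k hk
        simp only [Set.mem_Iic, Nat.le_zero] at hk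
        subst hk
        exact htt0
      have h1 : Nat.card (Set.Iic 0) ≤ N (tt n) := Nat.card_mono (hfin (tt n)) hsub
      simpa using h1
    have hNpos : (0:ℝ) < (N (tt n) : ℝ) := by exact_mod_cast hN1
    set r : ℝ := A * tt n ^ e / (N (tt n) : ℝ) with hrdef
    have hr0 : 0 ≤ r := by
      rw [hrdef]
      have h1 : 0 ≤ tt n ^ e := Real.rpow_nonneg httnn e
      positivity
    have key : A * tt n ^ e = (N (tt n) : ℝ) * r := by
      rw [hrdef]
      field_simp
    have key2 : A * tt n ^ e ≤ (n : ℝ) * r := by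
      rw [key]
      exact mul_le_mul_of_nonneg_right hNle hr0
    have hrpow : tt n ^ e = θ n ^ e * lam n ^ e := by
      show (θ n * lam n) ^ e = θ n ^ e * lam n ^ e
      exact Real.mul_rpow (hθ0 n) (hnonneg n)
    rw [hrpow] at key2
    have hθe : (0:ℝ) < θ n ^ e := Real.rpow_pos_of_pos hθpos e
    show A * lam n ^ e / n ≤ A * tt n ^ e / (N (tt n) : ℝ) / θ n ^ e
    rw [← hrdef, div_le_div_iff₀ hnpos hθe]
    calc A * lam n ^ e * θ n ^ e = A * (θ n ^ e * lam n ^ e) := by ring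
      _ ≤ (n : ℝ) * r := key2
      _ = r * n := by ring
  have hg : Tendsto g atTop (nhds 1) :=
    tendsto_of_tendsto_of_tendsto_of_le_of_le' hLtend hUtend hLg hgU
  -- conclude via continuity of x ↦ x ^ p at 1
  have hcomp : Tendsto (fun n : ℕ => g n ^ p) atTop (nhds 1) := by
    have hc := (Real.continuousAt_rpow_const 1 p (Or.inl one_ne_zero)).tendsto.comp hg
    simpa [Real.one_rpow, Function.comp_def] using hc
  refine hcomp.congr' ?_
  filter_upwards [eventually_ge_atTop 1] with n hn
  have hnpos : (0:ℝ) < n := by exact_mod_cast hn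
  have hXnn : (0:ℝ) ≤ A * lam n ^ e :=
    mul_nonneg hA.le (Real.rpow_nonneg (hnonneg n) e)
  have hcalc : g n ^ p = A ^ p * lam n / (n : ℝ) ^ p := by
    show (A * lam n ^ e / n) ^ p = A ^ p * lam n / (n : ℝ) ^ p
    rw [Real.div_rpow hXnn hnpos.le, Real.mul_rpow hA.le (Real.rpow_nonneg (hnonneg n) e),
      ← Real.rpow_mul (hnonneg n), hep, Real.rpow_one]
  rw [hcalc]
  have hAp : A ^ (-(2:ℝ) / d) = (A ^ p)⁻¹ := by
    rw [neg_div, ← hp, Real.rpow_neg hA.le]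
  rw [hAp]
  have hApos : (0:ℝ) < A ^ p := Real.rpow_pos_of_pos hA p
  have hnp : (0:ℝ) < (n : ℝ) ^ p := Real.rpow_pos_of_pos hnpos p
  field_simp
end

section
/- Let (γ_n)_{n∈ℕ} be independent real random variables on a probability space (Ω,𝓕,ℙ) with γ_n having (possibly degenerate) Gaussian law of mean μ_n and standard deviation σ_n, and let q ∈ ℝ. Suppose that either (a) there exists c > 0 such that limsup_{N→∞} (1/N) · #{n ≤ N : max(|μ_n|, σ_n) ≥ c(1+n)^q} > 0, or (b) ∑_{n=0}^∞ (1+n)^{−2q−1} μ_n² = ∞. Then for ℙ-almost all ω ∈ Ω one has ∑_{n=0}^∞ (1+n)^{−2q−1} γ_n(ω)² = ∞ (i.e. the sequence (γ_n(ω))_{n∈ℕ} does not lie in the weighted ℓ² space h^{−q−1/2}(ℕ)). -/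
/-!
Put `w n = (1 + n) ^ (-2q-1)` and truncate: `Z n = min (w n * γ n ^ 2) 1` are independent with
values in `[0, 1]`, and `∑ Z n = ∞` forces `∑ w n * γ n ^ 2 = ∞`. For such variables,
`∑ 𝔼 Z n = ∞` already gives `∑ Z n = ∞` almost surely, since by independence and convexity of `exp`
`𝔼 exp (-∑_{n<N} Z n) = ∏_{n<N} 𝔼 exp (-Z n) ≤ exp (-(1 - e⁻¹) ∑_{n<N} 𝔼 Z n) → 0`.

A Gaussian with mean `m` and standard deviation `s` satisfies `|x| ≥ max |m| s` with probability
at least `p > 0`, independently of `m` and `s` (it is `m + s y` with `y` standard, and `y ≥ 2` or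
`y ≤ -2` suffices, according to the sign of `m`). Hence
`𝔼 Z n ≥ p * min (w n * max |μ n| (σ n) ^ 2) 1`. Under (b) the right side is not summable. Under
(a) it is at least a multiple of `1 / (n + 1)` on a set of positive upper density, which
Kronecker's lemma rules out for a summable sequence.
-/

open MeasureTheory ProbabilityTheory Filter Finset Topology
open scoped NNReal

lemma Real.exp_neg_le_one_sub_mul {z : ℝ} (h0 : 0 ≤ z) (h1 : z ≤ 1) :
    Real.exp (-z) ≤ 1 - (1 - Real.exp (-1)) * z := by
  have h := convexOn_exp.2 (Set.mem_univ (-1)) (Set.mem_univ 0) h0 (sub_nonneg.2 h1)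
    (add_sub_cancel z 1)
  simp only [smul_eq_mul, mul_neg, mul_one, mul_zero, add_zero, Real.exp_zero] at h
  linarith

section

variable {Ω : Type*} [MeasurableSpace Ω] {P : Measure Ω} [IsProbabilityMeasure P]

lemma integral_exp_neg_le_exp_neg_mul_integral {Z : Ω → ℝ} (hZ : Measurable Z) (h0 : ∀ ω, 0 ≤ Z ω)
    (h1 : ∀ ω, Z ω ≤ 1) :
    ∫ ω, Real.exp (-Z ω) ∂P ≤ Real.exp (-((1 - Real.exp (-1)) * ∫ ω, Z ω ∂P)) := by
  have hint : Integrable Z P := Integrable.of_bound hZ.aestronglyMeasurable 1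
    (ae_of_all _ fun ω => by rw [Real.norm_of_nonneg (h0 ω)]; exact h1 ω)
  calc ∫ ω, Real.exp (-Z ω) ∂P ≤ ∫ ω, (1 - (1 - Real.exp (-1)) * Z ω) ∂P :=
        integral_mono_of_nonneg (ae_of_all _ fun ω => (Real.exp_pos _).le)
          ((integrable_const 1).sub (hint.const_mul _))
          (ae_of_all _ fun ω => Real.exp_neg_le_one_sub_mul (h0 ω) (h1 ω))
    _ = 1 - (1 - Real.exp (-1)) * ∫ ω, Z ω ∂P := by
        rw [integral_sub (integrable_const 1) (hint.const_mul _), integral_const_mul]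
        simp
    _ ≤ _ := by linarith [Real.add_one_le_exp (-((1 - Real.exp (-1)) * ∫ ω, Z ω ∂P))]

lemma integral_exp_neg_sum_range_le {Z : ℕ → Ω → ℝ} (hZ : ∀ n, Measurable (Z n))
    (hind : iIndepFun Z P) (h0 : ∀ n ω, 0 ≤ Z n ω) (h1 : ∀ n ω, Z n ω ≤ 1) (N : ℕ) :
    ∫ ω, Real.exp (-∑ n ∈ range N, Z n ω) ∂P
      ≤ Real.exp (-((1 - Real.exp (-1)) * ∑ n ∈ range N, ∫ ω, Z n ω ∂P)) := by
  have hprod : ∫ ω, Real.exp (-∑ n ∈ range N, Z n ω) ∂P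
      = ∏ n ∈ range N, ∫ ω, Real.exp (-Z n ω) ∂P := by
    have hindN : iIndepFun (fun (n : range N) ω => Real.exp (-Z n ω)) P :=
      (hind.comp (fun _ x => Real.exp (-x)) fun _ => by fun_prop).precomp Subtype.val_injective
    simp_rw [← sum_neg_distrib, Real.exp_sum, ← prod_coe_sort (range N)]
    exact hindN.integral_fun_prod_eq_prod_integral fun n => by fun_prop
  rw [hprod, mul_sum, ← sum_neg_distrib, Real.exp_sum]
  exact prod_le_prod (fun n _ => integral_nonneg fun ω => (Real.exp_pos _).le)
    fun n _ => integral_exp_neg_le_exp_neg_mul_integral (hZ n) (h0 n) (h1 n)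

theorem ae_not_summable_of_iIndepFun {Z : ℕ → Ω → ℝ} (hZ : ∀ n, Measurable (Z n))
    (hind : iIndepFun Z P) (h0 : ∀ n ω, 0 ≤ Z n ω) (h1 : ∀ n ω, Z n ω ≤ 1)
    (hdiv : ¬ Summable fun n => ∫ ω, Z n ω ∂P) :
    ∀ᵐ ω ∂P, ¬ Summable fun n => Z n ω := by
  set F : ℕ → Ω → ℝ := fun N ω => Real.exp (-∑ n ∈ range N, Z n ω)
  have hF : ∀ N, Measurable (F N) := fun N => by fun_prop
  have hF0 : ∀ N ω, 0 ≤ F N ω := fun N ω => (Real.exp_pos _).le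
  have hc : 0 < 1 - Real.exp (-1) := by
    linarith [Real.exp_lt_one_iff.mpr (show (-1 : ℝ) < 0 by norm_num)]
  have hlim : Tendsto (fun N => ∫ ω, F N ω ∂P) atTop (𝓝 0) := by
    refine squeeze_zero (fun N => integral_nonneg (hF0 N))
      (integral_exp_neg_sum_range_le hZ hind h0 h1) ?_
    refine Real.tendsto_exp_atBot.comp (tendsto_neg_atTop_atBot.comp ?_)
    exact ((not_summable_iff_tendsto_nat_atTop_of_nonneg
      fun n => integral_nonneg (h0 n)).1 hdiv).const_mul_atTop hc
  have hnull : ∀ k : ℕ, P {ω | ∀ N, ∑ n ∈ range N, Z n ω ≤ k} = 0 := by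
    intro k
    set A := {ω | ∀ N, ∑ n ∈ range N, Z n ω ≤ k}
    have hle : ∀ N, Real.exp (-k) * P.real A ≤ ∫ ω, F N ω ∂P := by
      intro N
      have hAF : A ⊆ {ω | Real.exp (-k) ≤ F N ω} := fun ω hω =>
        Real.exp_le_exp.2 (neg_le_neg (hω N))
      have hint : Integrable (F N) P := Integrable.of_bound (hF N).aestronglyMeasurable 1
        (ae_of_all _ fun ω => by
          rw [Real.norm_of_nonneg (hF0 N ω)]
          exact Real.exp_le_one_iff.2 (neg_nonpos.2 (sum_nonneg fun n _ => h0 n ω)))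
      exact (mul_le_mul_of_nonneg_left (measureReal_mono hAF) (Real.exp_pos _).le).trans
        (mul_meas_ge_le_integral_of_nonneg (ae_of_all _ (hF0 N)) hint _)
    rw [← measureReal_eq_zero_iff]
    exact le_antisymm (nonpos_of_mul_nonpos_right (ge_of_tendsto' hlim hle) (Real.exp_pos _))
      measureReal_nonneg
  have hsub : {ω | Summable fun n => Z n ω} ⊆ ⋃ k : ℕ, {ω | ∀ N, ∑ n ∈ range N, Z n ω ≤ k} :=
    fun ω hω => Set.mem_iUnion.2 ⟨⌈∑' n, Z n ω⌉₊, fun N =>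
      (hω.sum_le_tsum _ fun n _ => h0 n ω).trans (Nat.le_ceil _)⟩
  rw [ae_iff]
  simpa only [not_not] using measure_mono_null hsub (measure_iUnion_null hnull)

end

lemma sum_range_mul_le_sum_range_tsum {b : ℕ → ℝ} (hb0 : ∀ n, 0 ≤ b n) (hb : Summable b)
    (N : ℕ) :
    ∑ n ∈ range N, ((n : ℝ) + 1) * b n ≤ ∑ m ∈ range N, ∑' k, b (k + m) := by
  have hcomm : ∑ n ∈ range N, ((n : ℝ) + 1) * b n = ∑ m ∈ range N, ∑ n ∈ Ico m N, b n := by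
    rw [range_eq_Ico, sum_Ico_Ico_comm]
    simp
  rw [hcomm]
  refine sum_le_sum fun m _ => ?_
  rw [sum_Ico_eq_sum_range]
  simp_rw [add_comm m]
  exact ((summable_nat_add_iff m).2 hb).sum_le_tsum _ fun k _ => hb0 _

/-- Kronecker's lemma for the weights `n + 1`. -/
lemma tendsto_inv_mul_sum_range_mul_of_summable {b : ℕ → ℝ} (hb0 : ∀ n, 0 ≤ b n)
    (hb : Summable b) :
    Tendsto (fun N : ℕ => (N : ℝ)⁻¹ * ∑ n ∈ range N, ((n : ℝ) + 1) * b n) atTop (𝓝 0) :=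
  squeeze_zero (fun N => mul_nonneg (by positivity) (sum_nonneg fun n _ => by
      have := hb0 n; positivity))
    (fun N => mul_le_mul_of_nonneg_left (sum_range_mul_le_sum_range_tsum hb0 hb N) (by positivity))
    (tendsto_sum_nat_add b).cesaro

lemma tendsto_card_le_div_of_summable {p : ℕ → Prop} {b : ℕ → ℝ} (hb0 : ∀ n, 0 ≤ b n)
    (hb : Summable b) (hpb : ∀ n, p n → ((n : ℝ) + 1)⁻¹ ≤ b n) :
    Tendsto (fun N : ℕ => (Nat.card {n : ℕ | n ≤ N ∧ p n} : ℝ) / N) atTop (𝓝 0) := by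
  classical
  have hcard : ∀ N, (Nat.card {n : ℕ | n ≤ N ∧ p n} : ℝ)
      ≤ ∑ n ∈ range (N + 1), ((n : ℝ) + 1) * b n := by
    intro N
    have hset : {n : ℕ | n ≤ N ∧ p n} = ↑((range (N + 1)).filter p) := by
      ext n; simp
    rw [hset, Nat.card_coe_set_eq, Set.ncard_coe_finset, card_filter, Nat.cast_sum]
    refine sum_le_sum fun n _ => ?_
    split_ifs with hn
    · simpa [mul_inv_cancel₀ (show (n : ℝ) + 1 ≠ 0 by positivity)] using
        mul_le_mul_of_nonneg_left (hpb n hn) (by positivity : (0 : ℝ) ≤ n + 1)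
    · simp only [Nat.cast_zero]
      exact mul_nonneg (by positivity) (hb0 n)
  have hlim := (tendsto_inv_mul_sum_range_mul_of_summable hb0 hb).comp (tendsto_add_atTop_nat 1)
  refine squeeze_zero' (Eventually.of_forall fun N => by positivity) ?_
    (by simpa using hlim.const_mul 2)
  filter_upwards [eventually_ge_atTop 1] with N hN
  have hN' : (1 : ℝ) ≤ N := by exact_mod_cast hN
  calc (Nat.card {n : ℕ | n ≤ N ∧ p n} : ℝ) / N
      ≤ (∑ n ∈ range (N + 1), ((n : ℝ) + 1) * b n) / N := by gcongr; exact hcard N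
    _ ≤ 2 * (((N : ℝ) + 1)⁻¹ * ∑ n ∈ range (N + 1), ((n : ℝ) + 1) * b n) := by
      rw [div_eq_inv_mul, ← mul_assoc]
      gcongr
      · exact sum_nonneg fun n _ => mul_nonneg (by positivity) (hb0 n)
      · rw [inv_le_iff_one_le_mul₀ (by positivity)]
        field_simp
        linarith

lemma gaussianReal_eq_map_affine (m : ℝ) (s : ℝ≥0) :
    gaussianReal m (s ^ 2) = (gaussianReal 0 1).map fun y => m + s * y := by
  have h : (fun y : ℝ => m + s * y) = (m + ·) ∘ (s * ·) := rfl
  rw [h, ← Measure.map_map (by fun_prop) (by fun_prop), gaussianReal_map_const_mul,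
    gaussianReal_map_const_add]
  congr 1
  · ring
  · ext; simp

lemma min_gaussianReal_Ici_Iic_le (m : ℝ) (s : ℝ≥0) :
    min (gaussianReal 0 1 (Set.Ici 2)) (gaussianReal 0 1 (Set.Iic (-2)))
      ≤ gaussianReal m (s ^ 2) {x | max |m| s ≤ |x|} := by
  rw [gaussianReal_eq_map_affine, Measure.map_apply (by fun_prop)
    (measurableSet_le measurable_const (by fun_prop))]
  have hs : (0 : ℝ) ≤ s := s.2
  rcases le_total 0 m with hm | hm
  · refine (min_le_left _ _).trans (measure_mono fun y (hy : 2 ≤ y) => ?_)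
    simp only [Set.mem_preimage, Set.mem_ofPred_eq, abs_of_nonneg hm]
    exact max_le (by nlinarith) (by nlinarith) |>.trans (le_abs_self _)
  · refine (min_le_right _ _).trans (measure_mono fun y (hy : y ≤ -2) => ?_)
    simp only [Set.mem_preimage, Set.mem_ofPred_eq, abs_of_nonpos hm]
    exact max_le (by nlinarith) (by nlinarith) |>.trans (neg_le_abs _)

lemma min_mul_sq_mul_measureReal_le_integral (G : Measure ℝ) [IsFiniteMeasure G] {w t : ℝ}
    (hw : 0 ≤ w) (ht : 0 ≤ t) :
    min (w * t ^ 2) 1 * G.real {x | t ≤ |x|} ≤ ∫ x, min (w * x ^ 2) 1 ∂G := by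
  have hint : Integrable (fun x : ℝ => min (w * x ^ 2) 1) G :=
    Integrable.of_bound (by fun_prop) 1 (ae_of_all _ fun x => by
      rw [Real.norm_of_nonneg (by positivity)]; exact min_le_right _ _)
  have hsub : {x : ℝ | t ≤ |x|} ⊆ {x | min (w * t ^ 2) 1 ≤ min (w * x ^ 2) 1} := fun x hx => by
    have : t ^ 2 ≤ x ^ 2 := by simpa using pow_le_pow_left₀ ht hx 2
    simp only [Set.mem_ofPred_eq]
    gcongr
  exact (mul_le_mul_of_nonneg_left (measureReal_mono hsub) (by positivity)).trans
    (mul_meas_ge_le_integral_of_nonneg (ae_of_all _ fun x => by positivity) hint _)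

lemma exists_pos_mul_min_le_integral_gaussianReal :
    ∃ p > 0, ∀ (m : ℝ) (s : ℝ≥0) {w : ℝ}, 0 ≤ w →
      p * min (w * max |m| s ^ 2) 1 ≤ ∫ x, min (w * x ^ 2) 1 ∂gaussianReal m (s ^ 2) := by
  have hpos : ∀ S : Set ℝ, volume S ≠ 0 → gaussianReal 0 1 S ≠ 0 := fun S hS =>
    mt (fun h => gaussianReal_absolutelyContinuous' 0 one_ne_zero h) hS
  refine ⟨(min (gaussianReal 0 1 (Set.Ici 2)) (gaussianReal 0 1 (Set.Iic (-2)))).toReal,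
    ENNReal.toReal_pos (by simp [hpos, Real.volume_Ici, Real.volume_Iic]) (by simp), ?_⟩
  intro m s w hw
  calc _ ≤ min (w * max |m| s ^ 2) 1 * (gaussianReal m (s ^ 2)).real {x | max |m| s ≤ |x|} := by
        rw [mul_comm]
        gcongr
        exact ENNReal.toReal_mono (by simp) (min_gaussianReal_Ici_Iic_le m s)
    _ ≤ _ := min_mul_sq_mul_measureReal_le_integral _ hw (by positivity)

lemma Summable.of_summable_min_one {ι : Type*} {f : ι → ℝ} (hf : ∀ i, 0 ≤ f i)
    (h : Summable fun i => min (f i) 1) : Summable f := by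
  refine Summable.of_norm_bounded_eventually h ?_
  filter_upwards [h.tendsto_cofinite_zero.eventually (gt_mem_nhds one_pos)] with i hi
  have hi1 : f i < 1 := not_le.1 fun h1 => by simp [min_eq_right h1] at hi
  rw [Real.norm_of_nonneg (hf i), min_eq_left hi1.le]

lemma one_add_rpow_mul_sq_rpow_eq (n : ℕ) (q c : ℝ) :
    ((1 : ℝ) + n) ^ (-2 * q - 1) * (c * ((1 : ℝ) + n) ^ q) ^ 2 = c ^ 2 * ((n : ℝ) + 1)⁻¹ := by
  have hn : (0 : ℝ) < 1 + n := by positivity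
  rw [mul_pow, ← Real.rpow_two (_ ^ q), ← Real.rpow_mul hn.le, mul_left_comm,
    ← Real.rpow_add hn, show -2 * q - 1 + q * 2 = -1 by ring, Real.rpow_neg_one, add_comm]

section

variable (μ : ℕ → ℝ) (σ : ℕ → ℝ≥0) (q : ℝ)

lemma not_summable_integral_min_gaussianReal_of_density
    (h : ∃ c > (0 : ℝ), 0 < Filter.limsup (fun N : ℕ =>
          (Nat.card {n : ℕ | n ≤ N ∧ c * ((1 : ℝ) + n) ^ q ≤ max |μ n| (σ n : ℝ)} : ℝ) / N)
          atTop) :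
    ¬ Summable fun n : ℕ =>
      ∫ x, min (((1 : ℝ) + n) ^ (-2 * q - 1) * x ^ 2) 1 ∂gaussianReal (μ n) (σ n ^ 2) := by
  obtain ⟨c, hc, hdens⟩ := h
  obtain ⟨p, hp, hgauss⟩ := exists_pos_mul_min_le_integral_gaussianReal
  intro hsum
  set r := p * min (c ^ 2) 1
  have hr : 0 < r := by positivity
  refine hdens.ne' (Tendsto.limsup_eq (tendsto_card_le_div_of_summable (b := fun n => _ / r)
    (fun n => div_nonneg (integral_nonneg fun x => by positivity) hr.le) (hsum.div_const r) ?_))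
  intro n hn
  have hw : (0 : ℝ) ≤ ((1 : ℝ) + n) ^ (-2 * q - 1) := by positivity
  have hinv : ((n : ℝ) + 1)⁻¹ ≤ 1 := inv_le_one_of_one_le₀ (by simp)
  rw [le_div_iff₀ hr]
  refine le_trans ?_ (hgauss (μ n) (σ n) hw)
  calc ((n : ℝ) + 1)⁻¹ * r = p * (min (c ^ 2) 1 * ((n : ℝ) + 1)⁻¹) := by ring
    _ ≤ p * min (((1 : ℝ) + n) ^ (-2 * q - 1) * max |μ n| (σ n) ^ 2) 1 := by
      gcongr
      refine le_min ?_ ((mul_le_of_le_one_left (by positivity) (min_le_right _ _)).trans hinv)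
      calc min (c ^ 2) 1 * ((n : ℝ) + 1)⁻¹ ≤ c ^ 2 * ((n : ℝ) + 1)⁻¹ := by
            gcongr
            exact min_le_left _ _
        _ = ((1 : ℝ) + n) ^ (-2 * q - 1) * (c * ((1 : ℝ) + n) ^ q) ^ 2 :=
          (one_add_rpow_mul_sq_rpow_eq n q c).symm
        _ ≤ _ := by gcongr

lemma not_summable_integral_min_gaussianReal_of_mean
    (h : ¬ Summable fun n : ℕ => ((1 : ℝ) + n) ^ (-2 * q - 1) * μ n ^ 2) :
    ¬ Summable fun n : ℕ =>
      ∫ x, min (((1 : ℝ) + n) ^ (-2 * q - 1) * x ^ 2) 1 ∂gaussianReal (μ n) (σ n ^ 2) := by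
  obtain ⟨p, hp, hgauss⟩ := exists_pos_mul_min_le_integral_gaussianReal
  refine fun hsum => h (Summable.of_summable_min_one (fun n => by positivity) ?_)
  refine ((hsum.div_const p).of_nonneg_of_le (fun n => by positivity) fun n => ?_)
  rw [le_div_iff₀ hp, mul_comm]
  refine le_trans ?_ (hgauss (μ n) (σ n) (by positivity))
  have hμ : μ n ^ 2 ≤ max |μ n| (σ n) ^ 2 := by
    rw [← sq_abs]
    exact pow_le_pow_left₀ (abs_nonneg _) (le_max_left _ _) 2
  gcongr

end

/-- Global irregularity: if `γ_n` are independent Gaussians with means `μ_n` and standard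
deviations `σ_n`, and either (a) `max(|μ_n|, σ_n) ≥ c(1+n)^q` on a positive upper-density set
of `n`, or (b) `∑ (1+n)^{−2q−1} μ_n² = ∞`, then almost surely
`∑ (1+n)^{−2q−1} γ_n(ω)² = ∞`, i.e. `(γ_n(ω))` is not in `h^{−q−1/2}(ℕ)`. -/
theorem gaussian_noise_global_irregularity
    {Ω : Type*} [MeasurableSpace Ω] (P : Measure Ω) [IsProbabilityMeasure P]
    (γ : ℕ → Ω → ℝ) (hmeas : ∀ n, Measurable (γ n))
    (hindep : iIndepFun γ P)
    (μ : ℕ → ℝ) (σ : ℕ → ℝ≥0)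
    (hlaw : ∀ n, Measure.map (γ n) P = gaussianReal (μ n) (σ n ^ 2))
    (q : ℝ)
    (hyp :
      (∃ c > (0 : ℝ), 0 < Filter.limsup (fun N : ℕ =>
          (Nat.card {n : ℕ | n ≤ N ∧ c * ((1 : ℝ) + n) ^ q ≤ max |μ n| (σ n : ℝ)} : ℝ) / N)
          atTop)
      ∨ ¬ Summable (fun n : ℕ => ((1 : ℝ) + n) ^ (-2 * q - 1) * μ n ^ 2)) :
    ∀ᵐ ω ∂P, ¬ Summable (fun n : ℕ => ((1 : ℝ) + n) ^ (-2 * q - 1) * γ n ω ^ 2) := by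
  set w : ℕ → ℝ := fun n => ((1 : ℝ) + n) ^ (-2 * q - 1)
  have hw : ∀ n, 0 ≤ w n := fun n => by positivity
  have htrunc : ∀ n, Measurable fun x : ℝ => min (w n * x ^ 2) 1 := fun n => by fun_prop
  have htrunc0 : ∀ n x, 0 ≤ min (w n * x ^ 2) 1 := fun n x =>
    le_min (mul_nonneg (hw n) (sq_nonneg x)) zero_le_one
  have hmean : ¬ Summable fun n => ∫ ω, min (w n * γ n ω ^ 2) 1 ∂P := by
    simp_rw [← integral_map (hmeas _).aemeasurable (htrunc _).aestronglyMeasurable, hlaw]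
    exact hyp.elim (not_summable_integral_min_gaussianReal_of_density μ σ q)
      (not_summable_integral_min_gaussianReal_of_mean μ σ q)
  filter_upwards [ae_not_summable_of_iIndepFun (fun n => (htrunc n).comp (hmeas n))
    (hindep.comp _ htrunc) (fun n ω => htrunc0 n _) (fun n ω => min_le_right _ _) hmean]
    with ω hω hsum
  exact hω (hsum.of_nonneg_of_le (fun n => htrunc0 n _) fun n => min_le_left _ _)
end

section
/- Let 𝒳 be a separable Banach space, 𝒳_weak denote 𝒳 with its weak topology, S ⊆ 𝒳* an operator-norm dense set of continuous linear functionals, and 𝒳_S denote 𝒳 with the topology generated by the elements of S. Then the three Borel σ-algebras coincide: Borel(𝒳) = Borel(𝒳_weak) = Borel(𝒳_S); moreover Borel(𝒳_S) = σ(Λ : Λ ∈ S), the σ-algebra generated by the maps Λ ∈ S. The same conclusions hold whenever S ⊆ 𝒳* merely contains a countable subset S₀ such that ‖x‖_𝒳 = sup_{Λ∈S₀} |Λx| for all x ∈ 𝒳. -/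
open TopologicalSpace MeasurableSpace Metric Set

lemma aux_borel_le {X : Type*} [NormedAddCommGroup X] [NormedSpace ℝ X]
    [TopologicalSpace.SeparableSpace X]
    (S₀ : Set (X →L[ℝ] ℝ)) (hc : S₀.Countable)
    (hnorm : ∀ x : X, ‖x‖ = sSup ((fun Λ : X →L[ℝ] ℝ => ‖Λ x‖) '' S₀)) :
    borel X ≤ ⨆ Λ ∈ S₀, MeasurableSpace.comap (⇑Λ) (borel ℝ) := by
  set m := ⨆ Λ ∈ S₀, MeasurableSpace.comap (⇑Λ) (borel ℝ) with hm
  rcases S₀.eq_empty_or_nonempty with h0 | hne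
  · -- subsingleton case
    have hsub : ∀ x : X, x = 0 := by
      intro x
      have := hnorm x
      rw [h0, Set.image_empty, Real.sSup_empty] at this
      simpa [norm_eq_zero] using this
    refine MeasurableSpace.generateFrom_le ?_
    intro s _
    rcases s.eq_empty_or_nonempty with rfl | ⟨x, hx⟩
    · exact @MeasurableSet.empty _ m
    · have : s = Set.univ := by
        ext y
        simp only [Set.mem_univ, iff_true]
        have : y = x := by rw [hsub y, hsub x]
        rwa [this]
      rw [this]
      exact @MeasurableSet.univ _ m
  · have hbdd : ∀ x : X, BddAbove ((fun Λ : X →L[ℝ] ℝ => ‖Λ x‖) '' S₀) := by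
      intro x
      by_cases hx : x = 0
      · subst hx
        refine ⟨0, ?_⟩
        rintro t ⟨Λ, _, rfl⟩
        simp
      · by_contra h
        have := hnorm x
        rw [Real.sSup_of_not_bddAbove h] at this
        exact hx (norm_eq_zero.mp this)
    have hle : ∀ Λ ∈ S₀, ∀ x : X, ‖Λ x‖ ≤ ‖x‖ := by
      intro Λ hΛ x
      rw [hnorm x]
      exact le_csSup (hbdd x) ⟨Λ, hΛ, rfl⟩
    have hball : ∀ (c : X) (r : ℝ),
        closedBall c r = ⋂ Λ ∈ S₀, (⇑Λ) ⁻¹' (closedBall (Λ c) r) := by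
      intro c r
      ext x
      simp only [mem_closedBall, dist_eq_norm, Set.mem_iInter, Set.mem_preimage]
      constructor
      · intro h Λ hΛ
        calc ‖Λ x - Λ c‖ = ‖Λ (x - c)‖ := by rw [map_sub]
          _ ≤ ‖x - c‖ := hle Λ hΛ _
          _ ≤ r := h
      · intro h
        rw [hnorm (x - c)]
        refine csSup_le (hne.image _) ?_
        rintro t ⟨Λ, hΛ, rfl⟩
        simp only
        rw [map_sub]
        exact h Λ hΛ
    have hballm : ∀ (c : X) (r : ℝ), @MeasurableSet X m (closedBall c r) := by
      intro c r
      rw [hball]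
      refine MeasurableSet.biInter hc ?_
      intro Λ hΛ
      have h1 : @MeasurableSet X (MeasurableSpace.comap (⇑Λ) (borel ℝ))
          ((⇑Λ) ⁻¹' (closedBall (Λ c) r)) := by
        refine ⟨closedBall (Λ c) r, ?_, rfl⟩
        rw [← BorelSpace.measurable_eq (α := ℝ)]
        exact measurableSet_closedBall
      exact (le_iSup₂ (f := fun (Λ : X →L[ℝ] ℝ) (_ : Λ ∈ S₀) => MeasurableSpace.comap (⇑Λ) (borel ℝ)) Λ hΛ) _ h1
    obtain ⟨D, hDc, hDd⟩ := exists_countable_dense X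
    refine MeasurableSpace.generateFrom_le ?_
    intro U hU
    have hUeq : U = ⋃ c ∈ D, ⋃ q : ℚ, ⋃ (_ : closedBall c (q : ℝ) ⊆ U), closedBall c (q : ℝ) := by
      apply Set.Subset.antisymm
      · intro x hx
        obtain ⟨ε, hε, hball'⟩ := Metric.isOpen_iff.mp hU x hx
        obtain ⟨c, hcD, hcd⟩ := hDd.exists_dist_lt x (by positivity : (0:ℝ) < ε/3)
        obtain ⟨q, hq1, hq2⟩ := exists_rat_btwn (lt_of_lt_of_le hcd (by linarith : ε/3 ≤ 2*ε/3))
        have hsubU : closedBall c (q : ℝ) ⊆ U := by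
          refine Set.Subset.trans ?_ hball'
          intro y hy
          simp only [mem_closedBall, mem_ball] at *
          have : dist y x ≤ dist y c + dist c x := dist_triangle y c x
          rw [dist_comm c x] at this
          linarith
        refine Set.mem_biUnion hcD ?_
        refine Set.mem_iUnion.mpr ⟨q, Set.mem_iUnion.mpr ⟨hsubU, ?_⟩⟩
        simp only [mem_closedBall]
        exact le_of_lt hq1
      · refine Set.iUnion₂_subset fun c _ => Set.iUnion_subset fun q =>
          Set.iUnion_subset fun h => h
    rw [hUeq]
    exact MeasurableSet.biUnion hDc fun c _ =>
      MeasurableSet.iUnion fun q => MeasurableSet.iUnion fun _ => hballm c q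

open TopologicalSpace MeasurableSpace Metric Set

set_option maxHeartbeats 2000000 in
lemma aux_dense {X : Type*} [NormedAddCommGroup X] [NormedSpace ℝ X]
    [TopologicalSpace.SeparableSpace X]
    (S : Set (X →L[ℝ] ℝ)) (hd : Dense S) :
    ∃ S₀ ⊆ S, S₀.Countable ∧
      ∀ x : X, ‖x‖ = sSup ((fun Λ : X →L[ℝ] ℝ => ‖Λ x‖) '' S₀) := by
  rcases subsingleton_or_nontrivial X with hsub | hnt
  · obtain ⟨Λ, hΛ⟩ := hd.nonempty
    refine ⟨{Λ}, by simpa using hΛ, Set.countable_singleton _, ?_⟩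
    intro x
    have hx : x = 0 := Subsingleton.elim x 0
    subst hx
    simp
  · obtain ⟨u, hu⟩ := TopologicalSpace.exists_dense_seq X
    have hf : ∀ n : ℕ, ∃ f : X →L[ℝ] ℝ, ‖f‖ = 1 ∧ f (u n) = ‖u n‖ := fun n =>
      exists_dual_vector' ℝ (u n)
    choose f hf1 hf2 using hf
    have hδ : ∀ k : ℕ, (0:ℝ) < 1/(k+2) := by intro k; positivity
    have hg : ∀ n k : ℕ, ∃ g ∈ S, dist g ((1 - 1/((k:ℝ)+2)) • f n) < 1/((k:ℝ)+2)/2 := by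
      intro n k
      have hpos : (0:ℝ) < 1/((k:ℝ)+2)/2 := by positivity
      obtain ⟨g, hg1, hg2⟩ := hd.exists_dist_lt ((1 - 1/((k:ℝ)+2)) • f n) hpos
      exact ⟨g, hg1, by rwa [dist_comm] at hg2⟩
    choose g hgS hgd using hg
    refine ⟨Set.range (fun p : ℕ × ℕ => g p.1 p.2), ?_, Set.countable_range _, ?_⟩
    · rintro _ ⟨p, rfl⟩; exact hgS p.1 p.2
    intro x
    set T := (fun Λ : X →L[ℝ] ℝ => ‖Λ x‖) '' Set.range (fun p : ℕ × ℕ => g p.1 p.2) with hT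
    have hgnorm : ∀ n k : ℕ, ‖g n k‖ ≤ 1 := by
      intro n k
      have h1 : ‖g n k - (1 - 1/((k:ℝ)+2)) • f n‖ < 1/((k:ℝ)+2)/2 := by
        rw [← dist_eq_norm]; exact hgd n k
      have hnn : (0:ℝ) ≤ 1 - 1/((k:ℝ)+2) := by
        have : 1/((k:ℝ)+2) ≤ 1/2 := by
          apply div_le_div_of_nonneg_left <;> [norm_num; norm_num; (push_cast; linarith)]
        linarith
      have h2 : ‖(1 - 1/((k:ℝ)+2)) • f n‖ ≤ 1 - 1/((k:ℝ)+2) := by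
        apply ContinuousLinearMap.opNorm_le_bound _ hnn
        intro y
        have hy : ((1 - 1/((k:ℝ)+2)) • f n) y = (1 - 1/((k:ℝ)+2)) * f n y := by
          simp
        rw [hy, Real.norm_eq_abs, abs_mul, abs_of_nonneg hnn]
        apply mul_le_mul_of_nonneg_left _ hnn
        calc |f n y| = ‖f n y‖ := (Real.norm_eq_abs _).symm
          _ ≤ ‖f n‖ * ‖y‖ := (f n).le_opNorm _
          _ = ‖y‖ := by rw [hf1, one_mul]
      calc ‖g n k‖ = ‖(g n k - (1 - 1/((k:ℝ)+2)) • f n) + (1 - 1/((k:ℝ)+2)) • f n‖ := by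
            congr 1; abel
        _ ≤ ‖g n k - (1 - 1/((k:ℝ)+2)) • f n‖ + ‖(1 - 1/((k:ℝ)+2)) • f n‖ := norm_add_le _ _
        _ ≤ 1/((k:ℝ)+2)/2 + (1 - 1/((k:ℝ)+2)) := by linarith
        _ ≤ 1 := by
            have := hδ k
            linarith
    have hub : ∀ t ∈ T, t ≤ ‖x‖ := by
      rintro t ⟨Λ, ⟨p, rfl⟩, rfl⟩
      calc ‖g p.1 p.2 x‖ ≤ ‖g p.1 p.2‖ * ‖x‖ := (g p.1 p.2).le_opNorm x
        _ ≤ 1 * ‖x‖ := by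
            apply mul_le_mul_of_nonneg_right (hgnorm p.1 p.2) (norm_nonneg x)
        _ = ‖x‖ := one_mul _
    have hTne : T.Nonempty := ⟨‖g 0 0 x‖, ⟨g 0 0, ⟨(0,0), rfl⟩, rfl⟩⟩
    have hbddT : BddAbove T := ⟨‖x‖, hub⟩
    refine le_antisymm ?_ (csSup_le hTne hub)
    refine le_of_forall_pos_le_add ?_
    intro ε hε
    -- choose n with dist x (u n) < ε/4
    obtain ⟨n, hn⟩ := hu.exists_dist_lt x (show (0:ℝ) < ε/4 by positivity)
    have hfnx : f n x ≥ ‖x‖ - ε/2 := by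
      have h1 : f n x = f n (u n) + f n (x - u n) := by
        rw [map_sub]; ring
      have h2 : |f n (x - u n)| ≤ ‖x - u n‖ := by
        calc |f n (x - u n)| = ‖f n (x - u n)‖ := (Real.norm_eq_abs _).symm
          _ ≤ ‖f n‖ * ‖x - u n‖ := (f n).le_opNorm _
          _ = ‖x - u n‖ := by rw [hf1, one_mul]
      have h3 : ‖x - u n‖ < ε/4 := by rw [← dist_eq_norm]; exact hn
      have h4 : ‖u n‖ ≥ ‖x‖ - ε/4 := by
        have := norm_sub_norm_le x (u n)
        linarith [le_trans this (le_of_lt h3)]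
      have h5 : f n (x - u n) ≥ -(ε/4) := by
        have := neg_abs_le (f n (x - u n))
        linarith
      rw [h1, hf2]
      linarith
    -- choose k large
    obtain ⟨k, hk⟩ := exists_nat_gt (4*(‖x‖+1)/ε)
    have hk2 : 1/((k:ℝ)+2) < ε/(4*(‖x‖+1)) := by
      have hx1 : (0:ℝ) < 4*(‖x‖+1) := by positivity
      rw [div_lt_div_iff₀ (by positivity) hx1]
      have h : 4*(‖x‖+1)/ε < (k:ℝ)+2 := by linarith
      have h2 : 4*(‖x‖+1) = (4*(‖x‖+1)/ε) * ε := by field_simp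
      nlinarith
    set δ := 1/((k:ℝ)+2) with hδdef
    have hδpos : 0 < δ := hδ k
    have hδsmall : δ * (‖x‖+1) < ε/4 := by
      rw [hδdef]
      calc 1/((k:ℝ)+2) * (‖x‖+1) < ε/(4*(‖x‖+1)) * (‖x‖+1) := by
            apply mul_lt_mul_of_pos_right hk2 (by positivity)
        _ = ε/4 := by field_simp
    have hgx : g n k x ≥ ‖x‖ - ε := by
      have h1 : ‖g n k x - ((1 - δ) • f n) x‖ ≤ ‖g n k - (1 - δ) • f n‖ * ‖x‖ := by
        have := (g n k - (1 - δ) • f n).le_opNorm x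
        simpa using this
      have h2 : ‖g n k - (1 - δ) • f n‖ < δ/2 := by
        rw [← dist_eq_norm]; exact hgd n k
      have h3 : ((1 - δ) • f n) x = (1 - δ) * f n x := by simp
      have h4 : |f n x| ≤ ‖x‖ := by
        calc |f n x| = ‖f n x‖ := (Real.norm_eq_abs _).symm
          _ ≤ ‖f n‖ * ‖x‖ := (f n).le_opNorm _
          _ = ‖x‖ := by rw [hf1, one_mul]
      have h5 : (1 - δ) * f n x ≥ f n x - δ * ‖x‖ := by
        have : (1-δ) * f n x = f n x - δ * f n x := by ring
        rw [this]
        have : δ * f n x ≤ δ * ‖x‖ := by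
          apply mul_le_mul_of_nonneg_left _ (le_of_lt hδpos)
          exact le_trans (le_abs_self _) h4
        linarith
      have h6 : g n k x ≥ ((1 - δ) • f n) x - δ/2 * ‖x‖ := by
        have ha : g n k x - ((1 - δ) • f n) x ≥ -(δ/2 * ‖x‖) := by
          have hb : |g n k x - ((1 - δ) • f n) x| ≤ δ/2 * ‖x‖ := by
            rw [← Real.norm_eq_abs]
            refine le_trans h1 ?_
            apply mul_le_mul_of_nonneg_right (le_of_lt h2) (norm_nonneg x)
          linarith [neg_abs_le (g n k x - ((1 - δ) • f n) x)]
        linarith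
      have h7 : δ * ‖x‖ + δ/2 * ‖x‖ ≤ ε/2 := by
        have : δ * ‖x‖ ≤ δ * (‖x‖+1) := by nlinarith
        nlinarith [norm_nonneg x]
      rw [h3] at h6
      linarith
    have : ‖x‖ - ε ≤ ‖g n k x‖ := le_trans hgx (le_abs_self _)
    have hmem : ‖g n k x‖ ∈ T := ⟨g n k, ⟨(n,k), rfl⟩, rfl⟩
    linarith [le_csSup hbddT hmem]

open TopologicalSpace MeasurableSpace

/-- For a separable Banach space `X` and a set `S` of continuous linear functionals which is
either operator-norm dense or contains a countable norming subset `S₀`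
(`‖x‖ = sup_{Λ ∈ S₀} |Λ x|`), the Borel σ-algebra of the norm topology, of the weak topology,
and of the topology generated by `S` all coincide, and the latter equals the σ-algebra
generated by the maps `Λ ∈ S`. -/
theorem borel_norm_eq_borel_weak_eq_borel_S
    {X : Type*} [NormedAddCommGroup X] [NormedSpace ℝ X] [CompleteSpace X]
    [TopologicalSpace.SeparableSpace X]
    (S : Set (X →L[ℝ] ℝ))
    (hS : Dense S ∨ ∃ S₀ ⊆ S, S₀.Countable ∧
      ∀ x : X, ‖x‖ = sSup ((fun Λ : X →L[ℝ] ℝ => ‖Λ x‖) '' S₀)) :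
    borel X = @borel X (⨅ Λ : X →L[ℝ] ℝ, TopologicalSpace.induced (⇑Λ) inferInstance)
    ∧ borel X = @borel X (⨅ Λ ∈ S, TopologicalSpace.induced (⇑Λ) inferInstance)
    ∧ @borel X (⨅ Λ ∈ S, TopologicalSpace.induced (⇑Λ) inferInstance)
        = ⨆ Λ ∈ S, MeasurableSpace.comap (⇑Λ) (borel ℝ) := by
  obtain ⟨S₀, hS₀S, hS₀c, hS₀n⟩ : ∃ S₀ ⊆ S, S₀.Countable ∧
      ∀ x : X, ‖x‖ = sSup ((fun Λ : X →L[ℝ] ℝ => ‖Λ x‖) '' S₀) := by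
    rcases hS with hd | h
    · exact aux_dense S hd
    · exact h
  have h1 : borel X ≤ ⨆ Λ ∈ S₀, MeasurableSpace.comap (⇑Λ) (borel ℝ) :=
    aux_borel_le S₀ hS₀c hS₀n
  have h2 : (⨆ Λ ∈ S₀, MeasurableSpace.comap (⇑Λ) (borel ℝ))
      ≤ ⨆ Λ ∈ S, MeasurableSpace.comap (⇑Λ) (borel ℝ) := by
    refine iSup₂_le fun Λ hΛ => ?_
    exact le_iSup₂ (f := fun (Λ : X →L[ℝ] ℝ) (_ : Λ ∈ S) =>
      MeasurableSpace.comap (⇑Λ) (borel ℝ)) Λ (hS₀S hΛ)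
  have h3 : (⨆ Λ ∈ S, MeasurableSpace.comap (⇑Λ) (borel ℝ))
      ≤ @borel X (⨅ Λ ∈ S, TopologicalSpace.induced (⇑Λ) inferInstance) := by
    refine iSup₂_le fun Λ hΛ => ?_
    have hcont : @Continuous X ℝ (⨅ Λ ∈ S, TopologicalSpace.induced (⇑Λ) inferInstance) _ (⇑Λ) := by
      rw [continuous_iff_le_induced]
      exact iInf₂_le (f := fun (Λ : X →L[ℝ] ℝ) (_ : Λ ∈ S) =>
        TopologicalSpace.induced (⇑Λ) inferInstance) Λ hΛ
    have hmeas : @Measurable X ℝ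
        (@borel X (⨅ Λ ∈ S, TopologicalSpace.induced (⇑Λ) inferInstance)) (borel ℝ) (⇑Λ) :=
      @Continuous.borel_measurable X ℝ (⨅ Λ ∈ S, TopologicalSpace.induced (⇑Λ) inferInstance) _ (⇑Λ) hcont
    exact hmeas.comap_le
  have h4 : @borel X (⨅ Λ ∈ S, TopologicalSpace.induced (⇑Λ) inferInstance)
      ≤ @borel X (⨅ Λ : X →L[ℝ] ℝ, TopologicalSpace.induced (⇑Λ) inferInstance) := by
    apply borel_anti
    exact le_iInf₂ fun Λ _ => iInf_le _ Λ
  have h5 : @borel X (⨅ Λ : X →L[ℝ] ℝ, TopologicalSpace.induced (⇑Λ) inferInstance)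
      ≤ borel X := by
    apply borel_anti
    exact le_iInf fun Λ => continuous_iff_le_induced.mp Λ.continuous
  have e1 : borel X = ⨆ Λ ∈ S, MeasurableSpace.comap (⇑Λ) (borel ℝ) :=
    le_antisymm (le_trans h1 h2) (le_trans h3 (le_trans h4 h5))
  have e2 : borel X = @borel X (⨅ Λ ∈ S, TopologicalSpace.induced (⇑Λ) inferInstance) :=
    le_antisymm (le_trans (le_trans h1 h2) h3) (le_trans h4 h5)
  have e3 : borel X = @borel X (⨅ Λ : X →L[ℝ] ℝ, TopologicalSpace.induced (⇑Λ) inferInstance) :=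
    le_antisymm (le_trans (le_trans (le_trans h1 h2) h3) h4) h5
  exact ⟨e3, e2, e2.symm.trans e1⟩
end

section
/- Suppose that for ℙ-almost all ω ∈ Ω the partial sums Σ_N(ω) converge weakly in 𝒳 as N → ∞, i.e. there exists Σ(ω) ∈ 𝒳 with ⟨Σ_N(ω), y⟩_𝒳 → ⟨Σ(ω), y⟩_𝒳 for every y ∈ 𝒳. Then ∑_{n=0}^∞ ‖x_n‖_𝒳² < ∞. -/
/-!
By Banach–Steinhaus, weak convergence forces `sup_N ‖Σ_N‖ < ∞` almost surely, so for a large `M`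
the event `{∀ N, ‖Σ_N‖² ≤ M}` has probability close to one. On the other hand `Z = ‖Σ_N‖²` has
mean `V_N = ∑_{n ≤ N} ‖x_n‖²` and, by independence, `E Z² ≤ C V_N²` with `C` depending only on
the first four moments of the standard Gaussian. A second moment (Paley–Zygmund) argument then
gives `V_N ≤ 2 M` for every `N`.
-/

open MeasureTheory ProbabilityTheory Filter
open scoped NNReal ENNReal RealInnerProductSpace Topology

section SecondMomentMethod

variable {Ω : Type*} [MeasurableSpace Ω] {P : Measure Ω} {Z : Ω → ℝ}

lemma setIntegral_le_integral_sq_div_add [IsFiniteMeasure P] (hZ : Integrable Z P)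
    (hZ2 : Integrable (fun ω => Z ω ^ 2) P) (s : Set Ω) {t : ℝ} (ht : 0 < t) :
    ∫ ω in s, Z ω ∂P ≤ (∫ ω, Z ω ^ 2 ∂P) / (2 * t) + t / 2 * P.real s := by
  have amgm : ∀ ω, Z ω ≤ Z ω ^ 2 / (2 * t) + t / 2 := fun ω => by
    rw [div_add' _ _ _ (by positivity), le_div_iff₀ (by positivity)]
    nlinarith [sq_nonneg (Z ω - t)]
  have hZ2t : Integrable (fun ω => Z ω ^ 2 / (2 * t)) P := hZ2.div_const _
  calc ∫ ω in s, Z ω ∂P ≤ ∫ ω in s, (Z ω ^ 2 / (2 * t) + t / 2) ∂P :=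
        setIntegral_mono hZ.integrableOn (hZ2t.add (integrable_const _)).integrableOn amgm
    _ = (∫ ω in s, Z ω ^ 2 ∂P) / (2 * t) + t / 2 * P.real s := by
        rw [integral_add hZ2t.integrableOn (integrable_const _), integral_div, setIntegral_const,
          smul_eq_mul, mul_comm (P.real s)]
    _ ≤ _ := by
        gcongr
        · exact Eventually.of_forall fun ω => sq_nonneg _
        · exact Measure.restrict_le_self

lemma integral_le_two_mul_of_integral_sq_le [IsProbabilityMeasure P] (hZ : Integrable Z P)
    (hZ2 : Integrable (fun ω => Z ω ^ 2) P) {C M : ℝ} (hC : 0 < C) (hM : 0 ≤ M)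
    (hmoment : ∫ ω, Z ω ^ 2 ∂P ≤ C * (∫ ω, Z ω ∂P) ^ 2) {s : Set Ω} (hs : MeasurableSet s)
    (hZs : ∀ ω ∈ s, Z ω ≤ M) (hsc : C * P.real sᶜ ≤ 1 / 4) :
    ∫ ω, Z ω ∂P ≤ 2 * M := by
  set V := ∫ ω, Z ω ∂P
  rcases le_or_gt V 0 with hV | hV
  · linarith
  have on_s : ∫ ω in s, Z ω ∂P ≤ M := calc
    ∫ ω in s, Z ω ∂P ≤ ∫ ω in s, M ∂P :=
      setIntegral_mono_on hZ.integrableOn (integrable_const M).integrableOn hs hZs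
    _ = P.real s * M := by rw [setIntegral_const, smul_eq_mul]
    _ ≤ M := mul_le_of_le_one_left hM measureReal_le_one
  -- `t = 2 C V` balances the two terms of the AM-GM bound
  have off_s : ∫ ω in sᶜ, Z ω ∂P ≤ V / 2 := calc
    ∫ ω in sᶜ, Z ω ∂P
        ≤ (∫ ω, Z ω ^ 2 ∂P) / (2 * (2 * C * V)) + 2 * C * V / 2 * P.real sᶜ :=
      setIntegral_le_integral_sq_div_add hZ hZ2 sᶜ (by positivity)
    _ ≤ C * V ^ 2 / (2 * (2 * C * V)) + V * (1 / 4) := by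
      refine add_le_add (by gcongr) ?_
      nlinarith
    _ = V / 2 := by field_simp; ring
  linarith [integral_add_compl hs hZ]

end SecondMomentMethod

section

variable {Ω : Type*} [MeasurableSpace Ω] {P : Measure Ω}

lemma exists_measureReal_compl_setOf_forall_le_lt [IsFiniteMeasure P] {f : ℕ → Ω → ℝ}
    (hf : ∀ n, Measurable (f n)) (hbdd : ∀ᵐ ω ∂P, BddAbove (Set.range fun n => f n ω))
    {ε : ℝ} (hε : 0 < ε) :
    ∃ M : ℕ, P.real {ω | ∀ n, f n ω ≤ M}ᶜ < ε := by
  set s : ℕ → Set Ω := fun M => {ω | ∀ n, f n ω ≤ M}ᶜ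
  have hanti : Antitone s := fun M M' h => Set.compl_subset_compl.2 fun ω hω n =>
    (hω n).trans (by exact_mod_cast h)
  have hnull : P (⋂ M, s M) = 0 := by
    refine measure_mono_null (fun ω hω => ?_) (ae_iff.1 hbdd)
    rintro ⟨C, hC⟩
    obtain ⟨M, hM⟩ := exists_nat_ge C
    exact Set.mem_iInter.1 hω M fun n => (hC (Set.mem_range_self n)).trans hM
  have hlim := tendsto_measure_iInter_atTop
    (fun M => (measurableSet_setOfPred.2 (by fun_prop)).compl.nullMeasurableSet) hanti
    ⟨0, measure_ne_top P _⟩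
  rw [hnull] at hlim
  exact (((ENNReal.tendsto_toReal ENNReal.zero_ne_top).comp hlim).eventually
    (gt_mem_nhds hε)).exists

lemma exists_norm_le_of_tendsto_inner {X : Type*} [NormedAddCommGroup X] [InnerProductSpace ℝ X]
    [CompleteSpace X] {s : ℕ → X} {L : X}
    (h : ∀ y, Tendsto (fun N => ⟪s N, y⟫) atTop (𝓝 ⟪L, y⟫)) : ∃ C, ∀ N, ‖s N‖ ≤ C := by
  obtain ⟨C, hC⟩ := banach_steinhaus (g := fun N => innerSL ℝ (s N)) fun y => by
    obtain ⟨C, hC⟩ := (h y).norm.bddAbove_range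
    exact ⟨C, fun N => hC (Set.mem_range_self N)⟩
  exact ⟨C, fun N => by simpa only [innerSL_apply_norm] using hC N⟩

lemma norm_add_smul_sq {X : Type*} [NormedAddCommGroup X] [InnerProductSpace ℝ X] (a x : X)
    (t : ℝ) : ‖a + t • x‖ ^ 2 = ‖a‖ ^ 2 + 2 * ⟪a, x⟫ * t + ‖x‖ ^ 2 * t ^ 2 := by
  rw [norm_add_sq_real, real_inner_smul_right, norm_smul, mul_pow, Real.norm_eq_abs, sq_abs]
  ring

lemma MeasureTheory.memLp_sum_smul {X : Type*} [NormedAddCommGroup X] [NormedSpace ℝ X]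
    {p : ℝ≥0∞} {γ : ℕ → Ω → ℝ} (hγ : ∀ n, MemLp (γ n) p P) (x : ℕ → X) (s : Finset ℕ) :
    MemLp (fun ω => ∑ n ∈ s, γ n ω • x n) p P :=
  memLp_finsetSum s fun n _ => (memLp_top_const (x n)).smul (hγ n)

lemma measurable_sum_smul {X : Type*} [NormedAddCommGroup X] [NormedSpace ℝ X]
    [MeasurableSpace X] [BorelSpace X] {γ : ℕ → Ω → ℝ} (hmeas : ∀ n, Measurable (γ n))
    (x : ℕ → X) (s : Finset ℕ) : Measurable fun ω => ∑ n ∈ s, γ n ω • x n :=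
  (Finset.stronglyMeasurable_fun_sum s fun n _ =>
    (hmeas n).stronglyMeasurable.smul_const (x n)).measurable

lemma MeasureTheory.MemLp.integrable_norm_pow_of_le [IsFiniteMeasure P] {E : Type*}
    [NormedAddCommGroup E] {f : Ω → E} {p k : ℕ} (hf : MemLp f p P) (hk : k ≤ p) :
    Integrable (fun ω => ‖f ω‖ ^ k) P :=
  (hf.mono_exponent (by exact_mod_cast hk)).integrable_norm_pow'

lemma MeasureTheory.MemLp.integrable_inner_pow_mul_norm_pow [IsFiniteMeasure P] {X : Type*}
    [NormedAddCommGroup X] [InnerProductSpace ℝ X] {A : Ω → X} {p : ℕ} (hA : MemLp A p P)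
    (x : X) {j k : ℕ} (hjk : j + k ≤ p) :
    Integrable (fun ω => ⟪A ω, x⟫ ^ j * ‖A ω‖ ^ k) P := by
  refine ((hA.integrable_norm_pow_of_le hjk).const_mul (‖x‖ ^ j)).mono' ?_
    (Eventually.of_forall fun ω => ?_)
  · exact (((continuous_id.inner continuous_const).pow j).comp_aestronglyMeasurable
      hA.aestronglyMeasurable).mul (hA.aestronglyMeasurable.norm.pow k)
  · rw [norm_mul, norm_pow, norm_pow, norm_norm, Real.norm_eq_abs, pow_add, ← mul_assoc,
      ← mul_pow, mul_comm ‖x‖]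
    gcongr
    exact abs_real_inner_le_norm _ _

lemma ProbabilityTheory.IndepFun.integral_sum_mul_comp {β δ ι : Type*} [MeasurableSpace β]
    [MeasurableSpace δ] {A : Ω → β} {T : Ω → δ} (h : IndepFun A T P) (hA : AEMeasurable A P)
    (hT : AEMeasurable T P) (s : Finset ι) {F : ι → β → ℝ} {G : ι → δ → ℝ}
    (hF : ∀ i, Measurable (F i)) (hG : ∀ i, Measurable (G i))
    (hFA : ∀ i, Integrable (fun ω => F i (A ω)) P)
    (hGT : ∀ i, Integrable (fun ω => G i (T ω)) P) :
    ∫ ω, ∑ i ∈ s, F i (A ω) * G i (T ω) ∂P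
      = ∑ i ∈ s, (∫ ω, F i (A ω) ∂P) * ∫ ω, G i (T ω) ∂P := by
  have hi : ∀ i, IndepFun (fun ω => F i (A ω)) (fun ω => G i (T ω)) P :=
    fun i => h.comp (hF i) (hG i)
  rw [integral_finsetSum (f := fun i ω => F i (A ω) * G i (T ω)) s
    fun i _ => (hi i).integrable_mul (hFA i) (hGT i)]
  exact Finset.sum_congr rfl fun i _ => (hi i).integral_fun_mul_eq_mul_integral
    ((hF i).comp_aemeasurable hA).aestronglyMeasurable
    ((hG i).comp_aemeasurable hT).aestronglyMeasurable

lemma ProbabilityTheory.iIndepFun.indepFun_sum_range_smul {X : Type*} [NormedAddCommGroup X]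
    [NormedSpace ℝ X] [MeasurableSpace X] [BorelSpace X] {γ : ℕ → Ω → ℝ}
    (hindep : iIndepFun γ P) (hmeas : ∀ n, Measurable (γ n)) (x : ℕ → X) (N : ℕ) :
    IndepFun (fun ω => ∑ n ∈ Finset.range N, γ n ω • x n) (γ N) P := by
  have hφ : Measurable fun v : Finset.range N → ℝ => ∑ i, v i • x i :=
    (by fun_prop : Continuous _).measurable
  have hψ : Measurable fun v : ({N} : Finset ℕ) → ℝ => v ⟨N, Finset.mem_singleton_self N⟩ :=
    measurable_pi_apply _
  have h := (hindep.indepFun_finset (Finset.range N) {N} (by simp) hmeas).comp hφ hψ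
  convert h using 1
  · funext ω
    exact (Finset.sum_coe_sort (Finset.range N) fun n => γ n ω • x n).symm
  · rfl

variable {ν : Measure ℝ} {T : Ω → ℝ}

lemma ProbabilityTheory.HasLaw.memLp {p : ℝ≥0∞} (hT : HasLaw T ν P) (hν : MemLp id p ν) :
    MemLp T p P := by
  rw [← hT.map_eq] at hν
  exact (memLp_map_measure_iff aestronglyMeasurable_id hT.aemeasurable).1 hν

lemma ProbabilityTheory.HasLaw.integrable_pow_of_le [IsFiniteMeasure P] (hT : HasLaw T ν P)
    {p k : ℕ} (hν : MemLp id p ν) (hk : k ≤ p) : Integrable (fun ω => T ω ^ k) P := by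
  have hTp := hT.memLp hν
  refine (integrable_norm_iff (f := fun ω => T ω ^ k) (hTp.aestronglyMeasurable.pow k)).1 ?_
  simpa only [norm_pow] using hTp.integrable_norm_pow_of_le hk

lemma ProbabilityTheory.HasLaw.integral_pow (hT : HasLaw T ν P) (k : ℕ) :
    ∫ ω, T ω ^ k ∂P = ∫ t, t ^ k ∂ν :=
  hT.integral_comp (f := fun t => t ^ k) (by fun_prop)

section MomentsOfIndependentSum

variable {X : Type*} [NormedAddCommGroup X] [InnerProductSpace ℝ X] [MeasurableSpace X]
  [BorelSpace X] [IsProbabilityMeasure P] {A : Ω → X}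

lemma ProbabilityTheory.IndepFun.integral_norm_add_smul_sq (h : IndepFun A T P)
    (hA : MemLp A 2 P) (hT : HasLaw T ν P) (hν : MemLp id 2 ν) (h1 : ∫ t, t ∂ν = 0)
    (h2 : ∫ t, t ^ 2 ∂ν = 1) (x : X) :
    ∫ ω, ‖A ω + T ω • x‖ ^ 2 ∂P = ∫ ω, ‖A ω‖ ^ 2 ∂P + ‖x‖ ^ 2 := by
  set F : Fin 3 → X → ℝ := ![fun a => ‖a‖ ^ 2, fun a => 2 * ⟪a, x⟫, fun _ => ‖x‖ ^ 2]
  have expand : ∀ ω, ‖A ω + T ω • x‖ ^ 2 = ∑ i, F i (A ω) * T ω ^ (i : ℕ) := fun ω => by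
    simp [F, Fin.sum_univ_three, norm_add_smul_sq]
  have hF : ∀ i, Measurable (F i) := by
    intro i
    fin_cases i <;> simp only [F, Fin.zero_eta, Fin.mk_one, Fin.reduceFinMk, Matrix.cons_val] <;>
      fun_prop
  have hFA : ∀ i, Integrable (fun ω => F i (A ω)) P := by
    intro i; fin_cases i <;> simp only [F]
    · exact hA.integrable_norm_pow'
    · simpa using
        (hA.integrable_inner_pow_mul_norm_pow x (j := 1) (k := 0) (by norm_num)).const_mul 2
    · exact integrable_const _
  simp_rw [expand]
  rw [h.integral_sum_mul_comp (G := fun (i : Fin 3) t => t ^ (i : ℕ)) hA.aemeasurable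
    hT.aemeasurable _ hF (fun _ => by fun_prop) hFA
    (fun i => hT.integrable_pow_of_le hν (Nat.le_of_lt_succ i.isLt))]
  have : IsProbabilityMeasure ν := hT.isProbabilityMeasure_iff.1 ‹_›
  simp [F, Fin.sum_univ_three, hT.integral_pow, h1, h2]

lemma ProbabilityTheory.IndepFun.integral_norm_add_smul_pow_four_le (h : IndepFun A T P)
    (hA : MemLp A 4 P) (hT : HasLaw T ν P) (hν : MemLp id 4 ν) (h1 : ∫ t, t ∂ν = 0)
    (h2 : ∫ t, t ^ 2 ∂ν = 1) (h3 : ∫ t, t ^ 3 ∂ν = 0) {C : ℝ} (hC : 3 ≤ C)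
    (h4 : ∫ t, t ^ 4 ∂ν ≤ C) (hA4 : ∫ ω, ‖A ω‖ ^ 4 ∂P ≤ C * (∫ ω, ‖A ω‖ ^ 2 ∂P) ^ 2) (x : X) :
    ∫ ω, ‖A ω + T ω • x‖ ^ 4 ∂P ≤ C * (∫ ω, ‖A ω‖ ^ 2 ∂P + ‖x‖ ^ 2) ^ 2 := by
  set F : Fin 5 → X → ℝ := ![fun a => ‖a‖ ^ 4, fun a => 4 * (⟪a, x⟫ * ‖a‖ ^ 2),
    fun a => 2 * ‖x‖ ^ 2 * ‖a‖ ^ 2 + 4 * ⟪a, x⟫ ^ 2, fun a => 4 * ‖x‖ ^ 2 * ⟪a, x⟫,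
    fun _ => ‖x‖ ^ 4]
  have expand : ∀ ω, ‖A ω + T ω • x‖ ^ 4 = ∑ i, F i (A ω) * T ω ^ (i : ℕ) := fun ω => by
    rw [show 4 = 2 * 2 from rfl, pow_mul, norm_add_smul_sq]
    simp only [F, Fin.sum_univ_five, Matrix.cons_val, Fin.coe_ofNat_eq_mod, Nat.reduceMod]
    ring
  have hF : ∀ i, Measurable (F i) := by
    intro i
    fin_cases i <;> simp only [F, Fin.zero_eta, Fin.mk_one, Fin.reduceFinMk, Matrix.cons_val] <;>
      fun_prop
  have hAk {j k : ℕ} (hjk : j + k ≤ 4) := hA.integrable_inner_pow_mul_norm_pow x hjk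
  have hFA : ∀ i, Integrable (fun ω => F i (A ω)) P := by
    intro i; fin_cases i <;> simp only [F]
    · simpa using hAk (j := 0) (k := 4) le_rfl
    · simpa using (hAk (j := 1) (k := 2) (by norm_num)).const_mul 4
    · refine Integrable.add ?_ ?_
      · simpa using (hAk (j := 0) (k := 2) (by norm_num)).const_mul (2 * ‖x‖ ^ 2)
      · simpa using (hAk (j := 2) (k := 0) (by norm_num)).const_mul 4
    · simpa using (hAk (j := 1) (k := 0) (by norm_num)).const_mul (4 * ‖x‖ ^ 2)
    · exact integrable_const _
  have hF2 : ∫ ω, F 2 (A ω) ∂P ≤ 6 * ‖x‖ ^ 2 * ∫ ω, ‖A ω‖ ^ 2 ∂P := by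
    rw [← integral_const_mul]
    refine integral_mono (hFA 2) ((hA.integrable_norm_pow_of_le (by norm_num)).const_mul _)
      fun ω => ?_
    have := abs_real_inner_le_norm (A ω) x
    show 2 * ‖x‖ ^ 2 * ‖A ω‖ ^ 2 + 4 * ⟪A ω, x⟫ ^ 2 ≤ 6 * ‖x‖ ^ 2 * ‖A ω‖ ^ 2
    nlinarith [sq_abs ⟪A ω, x⟫, abs_nonneg ⟪A ω, x⟫, norm_nonneg (A ω), norm_nonneg x]
  simp_rw [expand]
  rw [h.integral_sum_mul_comp (G := fun (i : Fin 5) t => t ^ (i : ℕ)) hA.aemeasurable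
    hT.aemeasurable _ hF (fun _ => by fun_prop) hFA
    (fun i => hT.integrable_pow_of_le hν (Nat.le_of_lt_succ i.isLt))]
  have : IsProbabilityMeasure ν := hT.isProbabilityMeasure_iff.1 ‹_›
  simp only [Fin.sum_univ_five, hT.integral_pow, Fin.isValue, Fin.coe_ofNat_eq_mod, Nat.zero_mod,
    pow_zero, integral_const, probReal_univ, smul_eq_mul, mul_one, Nat.one_mod, pow_one, h1,
    mul_zero, add_zero, Nat.reduceMod, h2, h3, Nat.mod_succ]
  change ∫ ω, ‖A ω‖ ^ 4 ∂P + ∫ ω, F 2 (A ω) ∂P + (∫ _, ‖x‖ ^ 4 ∂P) * ∫ t, t ^ 4 ∂ν ≤ _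
  have hV : 0 ≤ ∫ ω, ‖A ω‖ ^ 2 ∂P := integral_nonneg fun ω => by positivity
  rw [integral_const, probReal_univ, one_smul]
  -- `3 ≤ C` is what absorbs the cross term `6 ‖x‖² V` into `2 C ‖x‖² V`
  nlinarith [mul_nonneg (mul_nonneg (sub_nonneg.2 hC) (sq_nonneg ‖x‖)) hV,
    mul_le_mul_of_nonneg_left h4 (by positivity : (0 : ℝ) ≤ ‖x‖ ^ 4)]

variable {γ : ℕ → Ω → ℝ}

lemma integral_norm_sum_smul_sq (hmeas : ∀ n, Measurable (γ n)) (hindep : iIndepFun γ P)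
    (hlaw : ∀ n, HasLaw (γ n) ν P) (hν : MemLp id 2 ν) (h1 : ∫ t, t ∂ν = 0)
    (h2 : ∫ t, t ^ 2 ∂ν = 1) (x : ℕ → X) (N : ℕ) :
    ∫ ω, ‖∑ n ∈ Finset.range N, γ n ω • x n‖ ^ 2 ∂P = ∑ n ∈ Finset.range N, ‖x n‖ ^ 2 := by
  induction N with
  | zero => simp
  | succ N ih =>
    simp only [Finset.sum_range_succ]
    rw [(hindep.indepFun_sum_range_smul hmeas x N).integral_norm_add_smul_sq
      (memLp_sum_smul (fun n => (hlaw n).memLp hν) x _) (hlaw N) hν h1 h2, ih]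

lemma integral_norm_sum_smul_pow_four_le (hmeas : ∀ n, Measurable (γ n))
    (hindep : iIndepFun γ P) (hlaw : ∀ n, HasLaw (γ n) ν P) (hν : MemLp id 4 ν)
    (h1 : ∫ t, t ∂ν = 0) (h2 : ∫ t, t ^ 2 ∂ν = 1) (h3 : ∫ t, t ^ 3 ∂ν = 0) {C : ℝ}
    (hC : 3 ≤ C) (h4 : ∫ t, t ^ 4 ∂ν ≤ C) (x : ℕ → X) (N : ℕ) :
    ∫ ω, ‖∑ n ∈ Finset.range N, γ n ω • x n‖ ^ 4 ∂P
      ≤ C * (∫ ω, ‖∑ n ∈ Finset.range N, γ n ω • x n‖ ^ 2 ∂P) ^ 2 := by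
  have hS := fun N => memLp_sum_smul (fun n => (hlaw n).memLp hν) x (Finset.range N)
  have hind := hindep.indepFun_sum_range_smul hmeas x
  have : IsProbabilityMeasure ν := (hlaw 0).isProbabilityMeasure_iff.1 ‹_›
  induction N with
  | zero => simp
  | succ N ih =>
    simp only [Finset.sum_range_succ]
    rw [(hind N).integral_norm_add_smul_sq ((hS N).mono_exponent (by norm_num)) (hlaw N)
      (hν.mono_exponent (by norm_num)) h1 h2]
    exact (hind N).integral_norm_add_smul_pow_four_le (hS N) (hlaw N) hν h1 h2 h3 hC h4 ih (x N)

lemma sum_range_norm_sq_le (hmeas : ∀ n, Measurable (γ n)) (hindep : iIndepFun γ P)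
    (hlaw : ∀ n, HasLaw (γ n) ν P) (hν : MemLp id 4 ν) (h1 : ∫ t, t ∂ν = 0)
    (h2 : ∫ t, t ^ 2 ∂ν = 1) (h3 : ∫ t, t ^ 3 ∂ν = 0) {C : ℝ} (hC : 3 ≤ C)
    (h4 : ∫ t, t ^ 4 ∂ν ≤ C) (x : ℕ → X) {M : ℝ} (hM : 0 ≤ M)
    (hsc : C * P.real {ω | ∀ N, ‖∑ n ∈ Finset.range (N + 1), γ n ω • x n‖ ^ 2 ≤ M}ᶜ ≤ 1 / 4)
    (N : ℕ) : ∑ n ∈ Finset.range N, ‖x n‖ ^ 2 ≤ 2 * M := by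
  refine le_trans (Finset.sum_le_sum_of_subset_of_nonneg (Finset.range_mono N.le_succ)
    fun n _ _ => by positivity) ?_
  have : IsProbabilityMeasure ν := (hlaw 0).isProbabilityMeasure_iff.1 ‹_›
  have hS := memLp_sum_smul (fun n => (hlaw n).memLp hν) x (Finset.range (N + 1))
  have hf := fun N => (measurable_sum_smul hmeas x (Finset.range (N + 1))).norm.pow_const 2
  rw [← integral_norm_sum_smul_sq hmeas hindep hlaw (hν.mono_exponent (by norm_num)) h1 h2]
  refine integral_le_two_mul_of_integral_sq_le
    (s := {ω | ∀ N, ‖∑ n ∈ Finset.range (N + 1), γ n ω • x n‖ ^ 2 ≤ M})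
    (hS.integrable_norm_pow_of_le (by norm_num))
    (by simpa only [← pow_mul] using hS.integrable_norm_pow_of_le le_rfl) (by linarith) hM ?_
    (measurableSet_setOfPred.2 (by fun_prop)) (fun ω hω => hω N) hsc
  simpa only [← pow_mul] using
    integral_norm_sum_smul_pow_four_le hmeas hindep hlaw hν h1 h2 h3 hC h4 x (N + 1)

end MomentsOfIndependentSum

end

lemma ProbabilityTheory.integral_sq_gaussianReal_zero (v : ℝ≥0) :
    ∫ t, t ^ 2 ∂gaussianReal 0 v = v := by
  simpa [variance_eq_integral measurable_id'.aemeasurable] using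
    variance_fun_id_gaussianReal (μ := 0) (v := v)

lemma ProbabilityTheory.integral_pow_gaussianReal_zero_of_odd (v : ℝ≥0) {k : ℕ} (hk : Odd k) :
    ∫ t, t ^ k ∂gaussianReal 0 v = 0 := by
  have h : ∫ t, t ^ k ∂gaussianReal 0 v = ∫ t, (-t) ^ k ∂gaussianReal 0 v := by
    conv_lhs => rw [← neg_zero, ← gaussianReal_map_neg]
    rw [integral_map (by fun_prop) (by fun_prop)]
  rw [funext fun t => hk.neg_pow t, integral_neg] at h
  linarith

theorem summable_sq_of_gaussian_series_weak_convergence_general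
    {X : Type*} [NormedAddCommGroup X] [InnerProductSpace ℝ X] [CompleteSpace X]
    {Ω : Type*} [MeasurableSpace Ω] (P : Measure Ω) [IsProbabilityMeasure P]
    (γ : ℕ → Ω → ℝ) (hmeas : ∀ n, Measurable (γ n))
    (hindep : iIndepFun γ P)
    (hlaw : ∀ n, Measure.map (γ n) P = gaussianReal 0 1)
    (x : ℕ → X)
    (hconv : ∀ᵐ ω ∂P, ∃ L : X, ∀ y : X,
      Tendsto (fun N => ⟪∑ n ∈ Finset.range (N + 1), γ n ω • x n, y⟫)
        atTop (nhds ⟪L, y⟫)) :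
    Summable (fun n => ‖x n‖ ^ 2) := by
  borelize X
  have hlaw' : ∀ n, HasLaw (γ n) (gaussianReal 0 1) P := fun n => ⟨(hmeas n).aemeasurable, hlaw n⟩
  have h2 : ∫ t, t ^ 2 ∂gaussianReal 0 1 = 1 := by simpa using integral_sq_gaussianReal_zero 1
  have h3 := integral_pow_gaussianReal_zero_of_odd 1 (k := 3) (by decide)
  set C := max 3 (∫ t, t ^ 4 ∂gaussianReal 0 1)
  have hC : 0 < C := lt_of_lt_of_le three_pos (le_max_left _ _)
  have hbdd : ∀ᵐ ω ∂P,
      BddAbove (Set.range fun N => ‖∑ n ∈ Finset.range (N + 1), γ n ω • x n‖ ^ 2) := by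
    filter_upwards [hconv] with ω ⟨L, hL⟩
    obtain ⟨B, hB⟩ := exists_norm_le_of_tendsto_inner hL
    exact ⟨B ^ 2, by rintro _ ⟨N, rfl⟩; exact pow_le_pow_left₀ (norm_nonneg _) (hB N) 2⟩
  obtain ⟨M, hM⟩ := exists_measureReal_compl_setOf_forall_le_lt
    (fun N => (measurable_sum_smul hmeas x (Finset.range (N + 1))).norm.pow_const 2) hbdd
    (by positivity : (0 : ℝ) < 1 / (4 * C))
  rw [lt_div_iff₀ (by positivity)] at hM
  exact summable_of_sum_range_le (fun n => by positivity) <|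
    sum_range_norm_sq_le hmeas hindep hlaw' (memLp_id_gaussianReal 4) integral_id_gaussianReal
      h2 h3 (le_max_left _ _) (le_max_right _ _) x M.cast_nonneg (by linarith)

/-- If the partial sums `Σ_N = ∑_{n=0}^N γ_n x_n` of a random Gaussian series in a separable
real Hilbert space converge weakly almost surely, then `∑ ‖x_n‖² < ∞`. -/
theorem summable_sq_of_gaussian_series_weak_convergence
    {X : Type*} [NormedAddCommGroup X] [InnerProductSpace ℝ X] [CompleteSpace X]
    [TopologicalSpace.SeparableSpace X]
    {Ω : Type*} [MeasurableSpace Ω] (P : Measure Ω) [IsProbabilityMeasure P]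
    (γ : ℕ → Ω → ℝ) (hmeas : ∀ n, Measurable (γ n))
    (hindep : iIndepFun γ P)
    (hlaw : ∀ n, Measure.map (γ n) P = gaussianReal 0 1)
    (x : ℕ → X)
    (hconv : ∀ᵐ ω ∂P, ∃ L : X, ∀ y : X,
      Tendsto (fun N => ⟪∑ n ∈ Finset.range (N + 1), γ n ω • x n, y⟫)
        atTop (nhds ⟪L, y⟫)) :
    Summable (fun n => ‖x n‖ ^ 2) :=
  summable_sq_of_gaussian_series_weak_convergence_general P γ hmeas hindep hlaw x hconv
end
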